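/- arXiv:2108.11624 — 5 statements merged into one kernel-verified Lean document; each statement's English description precedes it below -/
import Mathlib

section
/- Let $1<p,q<\infty$ with $1/p+1/q=1$, let $N\ge 1$ be a natural number, and let $(u_k)_{k=1}^N$, $(v_k)_{k=1}^N$ be positive reals. Suppose $A = \sup_{1\le t\le N} (\sum_{s=1}^{t} u_s^{-q})^{1/q}(\sum_{s=t}^{N} v_s^p)^{1/p} < \infty$. Then for every $\theta>1$ one has $A_\theta := \sup_{1\le t\le N} (\sum_{s=1}^t u_s^{-q})^{1/(\theta q)} \big(\sum_{s=t}^N v_s^p (\sum_{r=1}^s u_r^{-q})^{(p/q)(1-1/\theta)}\big)^{1/p} \le \theta^{1/p} A$. -/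
open Finset

-- concavity: for 0 ≤ b ≤ B, 0 < B, 0 < c ≤ 1:  b^c ≤ B^c + c * B^(c-1) * (b - B)
lemma bern_aux {b B c : ℝ} (hb : 0 ≤ b) (hbB : b ≤ B) (hB : 0 < B)
    (hc0 : 0 < c) (hc1 : c ≤ 1) :
    b ^ c ≤ B ^ c + c * B ^ (c - 1) * (b - B) := by
  have hs : (-1 : ℝ) ≤ b / B - 1 := by
    have : 0 ≤ b / B := div_nonneg hb hB.le
    linarith
  have h := rpow_one_add_le_one_add_mul_self hs hc0.le hc1
  rw [add_sub_cancel] at h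
  have hdiv : (b / B) ^ c = b ^ c / B ^ c := Real.div_rpow hb hB.le c
  rw [hdiv] at h
  have hBc : (0:ℝ) < B ^ c := Real.rpow_pos_of_pos hB c
  have h2 : b ^ c ≤ B ^ c * (1 + c * (b / B - 1)) := by
    rw [div_le_iff₀ hBc] at h
    linarith [h]
  refine h2.trans_eq ?_
  have hB1 : B ^ (c - 1) = B ^ c / B := by
    rw [Real.rpow_sub hB, Real.rpow_one]
  rw [hB1]
  field_simp

-- telescoping: ∑_{s=t}^{N} a s * (V s)^(c-1) ≤ (1/c) * (V t)^c
lemma tele_aux (a : ℕ → ℝ) (N : ℕ) {c : ℝ} (hc0 : 0 < c) (hc1 : c ≤ 1) :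
    ∀ m t : ℕ, N + 1 = t + m → (∀ s ∈ Icc t N, 0 < a s) →
    ∑ s ∈ Icc t N, a s * (∑ r ∈ Icc s N, a r) ^ (c - 1)
      ≤ (1 / c) * (∑ r ∈ Icc t N, a r) ^ c := by
  intro m
  induction m with
  | zero =>
    intro t hTm _
    have ht : N < t := by omega
    rw [Finset.Icc_eq_empty (by omega), Finset.sum_empty, Finset.sum_empty,
      Real.zero_rpow hc0.ne', mul_zero]
  | succ m ih =>
    intro t hTm ha
    have htN : t ≤ N := by omega
    have hmem : t ∈ Icc t N := by simp [htN]
    have hsplit : ∀ f : ℕ → ℝ, ∑ s ∈ Icc t N, f s = f t + ∑ s ∈ Icc (t+1) N, f s := by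
      intro f
      rw [Finset.Icc_eq_cons_Ioc htN, Finset.sum_cons, Finset.Icc_add_one_left_eq_Ioc]
    have ha' : ∀ s ∈ Icc (t+1) N, 0 < a s := fun s hs => ha s (by
      simp only [Finset.mem_Icc] at hs ⊢; omega)
    have hIH := ih (t+1) (by omega) ha'
    set Vt := ∑ r ∈ Icc t N, a r with hVt
    set Vt1 := ∑ r ∈ Icc (t+1) N, a r with hVt1
    have hVrel : Vt = a t + Vt1 := hsplit a
    have hVt1nn : 0 ≤ Vt1 := Finset.sum_nonneg fun s hs => (ha' s hs).le
    have hat : 0 < a t := ha t hmem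
    have hVtpos : 0 < Vt := by rw [hVrel]; linarith
    rw [hsplit (fun s => a s * (∑ r ∈ Icc s N, a r) ^ (c - 1))]
    have hbern := bern_aux hVt1nn (by linarith : Vt1 ≤ Vt) hVtpos hc0 hc1
    -- Vt1^c ≤ Vt^c + c * Vt^(c-1) * (Vt1 - Vt) = Vt^c - c * Vt^(c-1) * a t
    have key : a t * Vt ^ (c - 1) ≤ (1/c) * Vt ^ c - (1/c) * Vt1 ^ c := by
      have hsub : Vt1 - Vt = -(a t) := by rw [hVrel]; ring
      rw [hsub] at hbern
      have h1 : c * (a t * Vt ^ (c - 1)) ≤ Vt ^ c - Vt1 ^ c := by nlinarith [hbern]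
      have h2 : c * ((1/c) * Vt ^ c - (1/c) * Vt1 ^ c) = Vt ^ c - Vt1 ^ c := by
        field_simp
      exact le_of_mul_le_mul_left (by rw [h2]; exact h1) hc0
    calc a t * Vt ^ (c - 1) + ∑ s ∈ Icc (t+1) N, a s * (∑ r ∈ Icc s N, a r) ^ (c - 1)
        ≤ ((1/c) * Vt ^ c - (1/c) * Vt1 ^ c) + (1/c) * Vt1 ^ c := by
          exact add_le_add key hIH
      _ = (1/c) * Vt ^ c := by ring

theorem stmt2 (p q : ℝ) (hp : 1 < p) (hq : 1 < q) (hpq : 1 / p + 1 / q = 1)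
    (N : ℕ) (hN : 1 ≤ N) (u v : ℕ → ℝ)
    (hu : ∀ k ∈ Finset.Icc 1 N, 0 < u k) (hv : ∀ k ∈ Finset.Icc 1 N, 0 < v k)
    (A : ℝ)
    (hA : ∀ t ∈ Finset.Icc 1 N,
      (∑ s ∈ Finset.Icc 1 t, u s ^ (-q)) ^ (1 / q) *
        (∑ s ∈ Finset.Icc t N, v s ^ p) ^ (1 / p) ≤ A)
    (θ : ℝ) (hθ : 1 < θ) :
    ∀ t ∈ Finset.Icc 1 N,
      (∑ s ∈ Finset.Icc 1 t, u s ^ (-q)) ^ (1 / (θ * q)) *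
        (∑ s ∈ Finset.Icc t N,
            v s ^ p * (∑ r ∈ Finset.Icc 1 s, u r ^ (-q)) ^ ((p / q) * (1 - 1 / θ))) ^ (1 / p)
      ≤ θ ^ (1 / p) * A := by
  have hp0 : (0:ℝ) < p := lt_trans one_pos hp
  have hq0 : (0:ℝ) < q := lt_trans one_pos hq
  have hθ0 : (0:ℝ) < θ := lt_trans one_pos hθ
  have hθinv : 1 / θ < 1 := by rw [div_lt_one hθ0]; exact hθ
  have hθinv0 : 0 < 1 / θ := by positivity
  have he0 : 0 < 1 - 1 / θ := by linarith
  have hUpos : ∀ s ∈ Finset.Icc 1 N, 0 < ∑ r ∈ Finset.Icc 1 s, u r ^ (-q) := by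
    intro s hs
    rw [Finset.mem_Icc] at hs
    refine Finset.sum_pos (fun r hr => ?_) ⟨1, Finset.mem_Icc.mpr ⟨le_refl 1, hs.1⟩⟩
    rw [Finset.mem_Icc] at hr
    exact Real.rpow_pos_of_pos (hu r (Finset.mem_Icc.mpr ⟨hr.1, le_trans hr.2 hs.2⟩)) _
  have hVpos : ∀ s ∈ Finset.Icc 1 N, 0 < ∑ r ∈ Finset.Icc s N, v r ^ p := by
    intro s hs
    rw [Finset.mem_Icc] at hs
    refine Finset.sum_pos (fun r hr => ?_) ⟨s, Finset.mem_Icc.mpr ⟨le_refl s, hs.2⟩⟩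
    rw [Finset.mem_Icc] at hr
    exact Real.rpow_pos_of_pos (hv r (Finset.mem_Icc.mpr ⟨le_trans hs.1 hr.1, hr.2⟩)) _
  have h1mem : (1:ℕ) ∈ Finset.Icc 1 N := Finset.mem_Icc.mpr ⟨le_refl 1, hN⟩
  have hApos : 0 < A :=
    lt_of_lt_of_le (mul_pos (Real.rpow_pos_of_pos (hUpos 1 h1mem) _)
      (Real.rpow_pos_of_pos (hVpos 1 h1mem) _)) (hA 1 h1mem)
  intro t ht
  have ht' := Finset.mem_Icc.mp ht
  -- pointwise bound
  have hpt : ∀ s ∈ Finset.Icc t N,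
      v s ^ p * (∑ r ∈ Finset.Icc 1 s, u r ^ (-q)) ^ ((p / q) * (1 - 1 / θ))
        ≤ A ^ (p * (1 - 1 / θ)) *
          (v s ^ p * (∑ r ∈ Finset.Icc s N, v r ^ p) ^ (1 / θ - 1)) := by
    intro s hs
    rw [Finset.mem_Icc] at hs
    have hsN : s ∈ Finset.Icc 1 N := Finset.mem_Icc.mpr ⟨le_trans ht'.1 hs.1, hs.2⟩
    have hUs := hUpos s hsN
    have hVs := hVpos s hsN
    have h1 := hA s hsN
    have he : (0:ℝ) ≤ p * (1 - 1 / θ) := by positivity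
    have h2 : ((∑ r ∈ Finset.Icc 1 s, u r ^ (-q)) ^ (1/q) *
        (∑ r ∈ Finset.Icc s N, v r ^ p) ^ (1/p)) ^ (p * (1 - 1/θ))
        ≤ A ^ (p * (1 - 1/θ)) :=
      Real.rpow_le_rpow (by positivity) h1 he
    rw [Real.mul_rpow (Real.rpow_nonneg hUs.le _) (Real.rpow_nonneg hVs.le _),
      ← Real.rpow_mul hUs.le, ← Real.rpow_mul hVs.le] at h2
    have e1 : 1 / q * (p * (1 - 1/θ)) = (p/q) * (1 - 1/θ) := by ring
    have e2 : 1 / p * (p * (1 - 1/θ)) = 1 - 1/θ := by field_simp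
    rw [e1, e2] at h2
    have h3 : (∑ r ∈ Finset.Icc 1 s, u r ^ (-q)) ^ ((p/q) * (1 - 1/θ))
        ≤ A ^ (p * (1 - 1/θ)) / (∑ r ∈ Finset.Icc s N, v r ^ p) ^ (1 - 1/θ) :=
      (le_div_iff₀ (Real.rpow_pos_of_pos hVs _)).mpr h2
    have h4 := mul_le_mul_of_nonneg_left h3 (Real.rpow_nonneg (hv s hsN).le p)
    refine h4.trans_eq ?_
    rw [show (1/θ - 1 : ℝ) = -(1 - 1/θ) by ring, Real.rpow_neg hVs.le]
    field_simp
  have hsum1 := Finset.sum_le_sum hpt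
  rw [← Finset.mul_sum] at hsum1
  have htel := tele_aux (fun s => v s ^ p) N hθinv0 hθinv.le (N + 1 - t) t (by omega)
    (fun s hs => by
      rw [Finset.mem_Icc] at hs
      exact Real.rpow_pos_of_pos (hv s (Finset.mem_Icc.mpr ⟨le_trans ht'.1 hs.1, hs.2⟩)) _)
  rw [one_div_one_div] at htel
  have hsum2 : ∑ s ∈ Finset.Icc t N,
      v s ^ p * (∑ r ∈ Finset.Icc 1 s, u r ^ (-q)) ^ ((p / q) * (1 - 1 / θ))
      ≤ A ^ (p * (1 - 1/θ)) * (θ * (∑ r ∈ Finset.Icc t N, v r ^ p) ^ (1/θ)) := by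
    refine hsum1.trans (mul_le_mul_of_nonneg_left ?_ (Real.rpow_nonneg hApos.le _))
    exact htel
  -- raise to 1/p and combine
  have hVt := hVpos t ht
  have hUt := hUpos t ht
  have hSnn : 0 ≤ ∑ s ∈ Finset.Icc t N,
      v s ^ p * (∑ r ∈ Finset.Icc 1 s, u r ^ (-q)) ^ ((p / q) * (1 - 1 / θ)) := by
    refine Finset.sum_nonneg fun s hs => ?_
    rw [Finset.mem_Icc] at hs
    have hsN : s ∈ Finset.Icc 1 N := Finset.mem_Icc.mpr ⟨le_trans ht'.1 hs.1, hs.2⟩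
    exact mul_nonneg (Real.rpow_nonneg (hv s hsN).le _) (Real.rpow_nonneg (hUpos s hsN).le _)
  have h5 : (∑ s ∈ Finset.Icc t N,
      v s ^ p * (∑ r ∈ Finset.Icc 1 s, u r ^ (-q)) ^ ((p / q) * (1 - 1 / θ))) ^ (1/p)
      ≤ A ^ (1 - 1/θ) * θ ^ (1/p) * ((∑ r ∈ Finset.Icc t N, v r ^ p) ^ (1/θ)) ^ (1/p) := by
    have := Real.rpow_le_rpow hSnn hsum2 (by positivity : (0:ℝ) ≤ 1/p)
    refine this.trans_eq ?_
    rw [Real.mul_rpow (Real.rpow_nonneg hApos.le _)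
        (by positivity),
      Real.mul_rpow hθ0.le (Real.rpow_nonneg hVt.le _),
      ← Real.rpow_mul hApos.le]
    rw [show p * (1 - 1/θ) * (1/p) = 1 - 1/θ by field_simp]
    ring
  have hmono := mul_le_mul_of_nonneg_left h5 (Real.rpow_nonneg hUt.le (1 / (θ * q)))
  refine hmono.trans ?_
  have hkey : (∑ r ∈ Finset.Icc 1 t, u r ^ (-q)) ^ (1 / (θ * q)) *
      ((∑ r ∈ Finset.Icc t N, v r ^ p) ^ (1/θ)) ^ (1/p)
      = ((∑ r ∈ Finset.Icc 1 t, u r ^ (-q)) ^ (1/q) *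
        (∑ r ∈ Finset.Icc t N, v r ^ p) ^ (1/p)) ^ (1/θ) := by
    rw [Real.mul_rpow (Real.rpow_nonneg hUt.le _) (Real.rpow_nonneg hVt.le _),
      ← Real.rpow_mul hUt.le, ← Real.rpow_mul hVt.le, ← Real.rpow_mul hVt.le]
    congr 2
    · field_simp
    · ring
  have hkey2 : ((∑ r ∈ Finset.Icc 1 t, u r ^ (-q)) ^ (1/q) *
        (∑ r ∈ Finset.Icc t N, v r ^ p) ^ (1/p)) ^ (1/θ) ≤ A ^ (1/θ) :=
    Real.rpow_le_rpow (by positivity) (hA t ht) (by positivity)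
  calc (∑ r ∈ Finset.Icc 1 t, u r ^ (-q)) ^ (1 / (θ * q)) *
        (A ^ (1 - 1/θ) * θ ^ (1/p) * ((∑ r ∈ Finset.Icc t N, v r ^ p) ^ (1/θ)) ^ (1/p))
      = A ^ (1 - 1/θ) * θ ^ (1/p) *
        ((∑ r ∈ Finset.Icc 1 t, u r ^ (-q)) ^ (1 / (θ * q)) *
          ((∑ r ∈ Finset.Icc t N, v r ^ p) ^ (1/θ)) ^ (1/p)) := by ring
    _ ≤ A ^ (1 - 1/θ) * θ ^ (1/p) * (A ^ (1/θ)) := by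
        refine mul_le_mul_of_nonneg_left ?_ (by positivity)
        rw [hkey]; exact hkey2
    _ = θ ^ (1/p) * A := by
        rw [mul_comm (A ^ (1 - 1/θ)) (θ ^ (1/p)), mul_assoc,
          ← Real.rpow_add hApos]
        norm_num
end

section
/- Let $\Gamma$ be a finite rooted tree with root $a$ and partial order $\preceq$ (where $s\preceq t$ iff $s$ lies on the path from the root to $t$), let $\Gamma^*=\Gamma\setminus\{a\}$, and let $1<p,q<\infty$ with $1/p+1/q=1$. Let $(u_t)_{t\in\Gamma^*}$, $(v_t)_{t\in\Gamma^*}$ be positive weights. Suppose that for some $\theta>1$, $A_{tree} := \sup_{t\in\Gamma^*} \big(\sum_{a\prec s\preceq t} u_s^{-q}\big)^{1/(\theta q)} \big(\sum_{s\succeq t} v_s^p (\sum_{a\prec r\preceq s} u_r^{-q})^{(p/q)(1-1/\theta)}\big)^{1/p} < \infty$. Then for every family of nonnegative reals $(d_t)_{t\in\Gamma^*}$, $\big(\sum_{s\in\Gamma^*} \big(v_s \sum_{a\prec t\preceq s} d_t\big)^p\big)^{1/p} \le \big(\tfrac{\theta}{\theta-1}\big)^{1/q} A_{tree} \big(\sum_{s\in\Gamma^*}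 (d_s u_s)^p\big)^{1/p}$. -/
/-!
Write `N t = ∑_{a ≺ r ⪯ t} u_r^{-q}`. Hölder's inequality with weights `u_t N_t^{1/(θq)}`
bounds `(∑_{t ∈ 𝒫_s} d_t)^p` by
`(∑_{t ∈ 𝒫_s} u_t^{-q} N_t^{-1/θ})^{p/q} · ∑_{t ∈ 𝒫_s} (d_t u_t N_t^{1/(θq)})^p`.
Since `u_t^{-q} = N_t - N_{par t}`, concavity of `x ↦ x^{1-1/θ}` bounds the first factor by the
telescoping sum `θ/(θ-1) · N_s^{1-1/θ}`. Multiplying by `v_s^p`, summing over `s` and exchanging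
the sums over paths and shadows leaves, for each `t`, exactly the shadow sum controlled by `A`.
-/

open Finset
open scoped Classical

/-- `s ⪯ t` in the rooted tree with parent map `par`: `s` lies on the path from the root to `t`. -/
def treeLe {Γ : Type*} (par : Γ → Γ) (s t : Γ) : Prop := ∃ m : ℕ, par^[m] t = s

open Real

section Tree

variable {Γ : Type*} (par : Γ → Γ) (a : Γ)

lemma treeLe_iff_eq_or_treeLe_parent {r t : Γ} :
    treeLe par r t ↔ r = t ∨ treeLe par r (par t) := by
  constructor
  · rintro ⟨_ | m, hm⟩
    · exact .inl hm.symm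
    · exact .inr ⟨m, by rwa [Function.iterate_succ_apply] at hm⟩
  · rintro (rfl | ⟨m, hm⟩)
    · exact ⟨0, rfl⟩
    · exact ⟨m + 1, by rwa [Function.iterate_succ_apply]⟩

lemma treeLe_root_iff (hroot : par a = a) {s : Γ} : treeLe par s a ↔ s = a := by
  simp only [treeLe, Function.iterate_fixed hroot, exists_const, eq_comm]

lemma eq_root_of_iterate_eq_self (hroot : par a = a) (hreach : ∀ t, ∃ m : ℕ, par^[m] t = a)
    {t : Γ} {k : ℕ} (hk : k ≠ 0) (h : par^[k] t = t) : t = a := by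
  obtain ⟨m, hm⟩ := hreach t
  have hcycle : par^[k * m] t = t := by
    rw [Function.iterate_mul]; exact Function.iterate_fixed h m
  calc t = par^[k * m] t := hcycle.symm
    _ = par^[k * m - m] (par^[m] t) := by
        rw [← Function.iterate_add_apply,
          Nat.sub_add_cancel (Nat.le_mul_of_pos_left m (Nat.pos_of_ne_zero hk))]
    _ = a := by rw [hm, Function.iterate_fixed hroot]

lemma not_treeLe_parent (hroot : par a = a) (hreach : ∀ t, ∃ m : ℕ, par^[m] t = a)
    {t : Γ} (ht : t ≠ a) : ¬ treeLe par t (par t) := fun ⟨m, hm⟩ =>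
  ht <| eq_root_of_iterate_eq_self par a hroot hreach m.succ_ne_zero
    (by rwa [Function.iterate_succ_apply])

variable [Fintype Γ]

noncomputable def pathSet (t : Γ) : Finset Γ := univ.filter fun r => treeLe par r t ∧ r ≠ a

noncomputable def shadowSet (t : Γ) : Finset Γ := univ.filter fun s => treeLe par t s ∧ s ≠ a

lemma pathSet_root (hroot : par a = a) : pathSet par a a = ∅ := by
  ext r
  simp [pathSet, treeLe_root_iff par a hroot]

lemma mem_pathSet_self {t : Γ} (ht : t ≠ a) : t ∈ pathSet par a t := by
  simpa [pathSet, ht] using ⟨0, rfl⟩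

lemma sum_pathSet_of_ne_root {M : Type*} [AddCommMonoid M] (hroot : par a = a)
    (hreach : ∀ t, ∃ m : ℕ, par^[m] t = a) (w : Γ → M) {t : Γ} (ht : t ≠ a) :
    ∑ r ∈ pathSet par a t, w r = w t + ∑ r ∈ pathSet par a (par t), w r := by
  have hpath : pathSet par a t = insert t (pathSet par a (par t)) := by
    ext r
    simp only [pathSet, mem_filter, mem_univ, true_and, mem_insert,
      treeLe_iff_eq_or_treeLe_parent par (t := t)]
    grind
  rw [hpath, sum_insert]
  simp [pathSet, not_treeLe_parent par a hroot hreach ht]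

lemma sum_pathSet_sub_parent {G : Type*} [AddCommGroup G] (hroot : par a = a)
    (hreach : ∀ t, ∃ m : ℕ, par^[m] t = a) (F : Γ → G) (t : Γ) :
    ∑ r ∈ pathSet par a t, (F r - F (par r)) = F t - F a := by
  obtain ⟨n, hn⟩ := hreach t
  induction n generalizing t with
  | zero =>
    rw [Function.iterate_zero_apply] at hn
    simp [hn, pathSet_root par a hroot]
  | succ n ih =>
    by_cases ht : t = a
    · simp [ht, pathSet_root par a hroot]
    rw [sum_pathSet_of_ne_root par a hroot hreach _ ht, ih (par t) hn]
    abel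

lemma sum_sum_pathSet_comm {M : Type*} [AddCommMonoid M] (f : Γ → Γ → M) :
    ∑ s ∈ univ.filter (fun s => s ≠ a), ∑ t ∈ pathSet par a s, f s t
      = ∑ t ∈ univ.filter (fun t => t ≠ a), ∑ s ∈ shadowSet par a t, f s t :=
  sum_comm' fun s t => by simp only [pathSet, shadowSet, mem_filter, mem_univ, true_and]; tauto

end Tree

lemma mul_sub_mul_rpow_sub_one_le {σ x y : ℝ} (hσ0 : 0 ≤ σ) (hσ1 : σ ≤ 1) (hx : 0 < x)
    (hy : 0 ≤ y) : σ * (x - y) * x ^ (σ - 1) ≤ x ^ σ - y ^ σ := by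
  have amgm := geom_mean_le_arith_mean2_weighted hσ0 (sub_nonneg.2 hσ1) hy hx.le
    (add_sub_cancel σ 1)
  have hxσ : 0 < x ^ σ := rpow_pos_of_pos hx σ
  rw [rpow_sub hx, rpow_one, mul_div_assoc', div_le_iff₀ hxσ] at amgm
  rw [rpow_sub_one hx.ne', mul_div_assoc', div_le_iff₀ hx]
  nlinarith

lemma rpow_sum_le_sum_mul_rpow_mul {ι : Type*} (s : Finset ι) {p q : ℝ}
    (hpq : p.HolderConjugate q) {x w : ι → ℝ} (hx : ∀ i ∈ s, 0 ≤ x i)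
    (hw : ∀ i ∈ s, 0 < w i) :
    (∑ i ∈ s, x i) ^ p
      ≤ (∑ i ∈ s, (x i * w i) ^ p) * (∑ i ∈ s, w i ^ (-q)) ^ (p / q) := by
  have holder := inner_le_Lp_mul_Lq_of_nonneg s hpq (f := fun i => x i * w i)
    (g := fun i => (w i)⁻¹) (fun i hi => mul_nonneg (hx i hi) (hw i hi).le)
    (fun i hi => inv_nonneg.2 (hw i hi).le)
  have hxw : ∀ i ∈ s, x i * w i * (w i)⁻¹ = x i := fun i hi =>
    mul_inv_cancel_right₀ (hw i hi).ne' _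
  have hwq : ∀ i ∈ s, (w i)⁻¹ ^ q = w i ^ (-q) := fun i hi => by
    rw [inv_rpow (hw i hi).le, rpow_neg (hw i hi).le]
  rw [sum_congr rfl hxw, sum_congr rfl hwq] at holder
  have hX : 0 ≤ ∑ i ∈ s, (x i * w i) ^ p :=
    sum_nonneg fun i hi => rpow_nonneg (mul_nonneg (hx i hi) (hw i hi).le) p
  have hW : 0 ≤ ∑ i ∈ s, w i ^ (-q) := sum_nonneg fun i hi => (rpow_pos_of_pos (hw i hi) _).le
  calc (∑ i ∈ s, x i) ^ p
      ≤ ((∑ i ∈ s, (x i * w i) ^ p) ^ (1 / p) * (∑ i ∈ s, w i ^ (-q)) ^ (1 / q)) ^ p :=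
        rpow_le_rpow (sum_nonneg hx) holder hpq.nonneg
    _ = _ := by
        rw [mul_rpow (rpow_nonneg hX _) (rpow_nonneg hW _), ← rpow_mul hX, ← rpow_mul hW,
          one_div_mul_cancel hpq.ne_zero, rpow_one, one_div_mul_eq_div]

section Hardy

variable {Γ : Type*} [Fintype Γ] (par : Γ → Γ) (a : Γ)

noncomputable def pathWeight (u : Γ → ℝ) (q : ℝ) (t : Γ) : ℝ :=
  ∑ r ∈ pathSet par a t, u r ^ (-q)

variable {u : Γ → ℝ} (q : ℝ)

lemma pathWeight_nonneg (hu : ∀ t, t ≠ a → 0 < u t) (t : Γ) : 0 ≤ pathWeight par a u q t :=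
  sum_nonneg fun r hr => (rpow_pos_of_pos (hu r (mem_filter.1 hr).2.2) _).le

lemma pathWeight_pos (hu : ∀ t, t ≠ a → 0 < u t) {t : Γ} (ht : t ≠ a) :
    0 < pathWeight par a u q t :=
  sum_pos (fun r hr => rpow_pos_of_pos (hu r (mem_filter.1 hr).2.2) _)
    ⟨t, mem_pathSet_self par a ht⟩

lemma sum_shadowSet_nonneg {v : Γ → ℝ} (hu : ∀ t, t ≠ a → 0 < u t)
    (hv : ∀ t, t ≠ a → 0 < v t) {r e : ℝ} (t : Γ) :
    0 ≤ ∑ s ∈ shadowSet par a t, v s ^ r * pathWeight par a u q s ^ e :=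
  sum_nonneg fun s hs => mul_nonneg (rpow_nonneg (hv s (mem_filter.1 hs).2.2).le _)
    (rpow_nonneg (pathWeight_nonneg par a q hu s) _)

lemma pathWeight_root (hroot : par a = a) : pathWeight par a u q a = 0 := by
  simp [pathWeight, pathSet_root par a hroot]

lemma pathWeight_sub_parent (hroot : par a = a) (hreach : ∀ t, ∃ m : ℕ, par^[m] t = a)
    {t : Γ} (ht : t ≠ a) :
    pathWeight par a u q t - pathWeight par a u q (par t) = u t ^ (-q) := by
  unfold pathWeight
  rw [sum_pathSet_of_ne_root par a hroot hreach _ ht, add_sub_cancel_right]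

lemma sum_pathSet_mul_pathWeight_rpow_le (hroot : par a = a)
    (hreach : ∀ t, ∃ m : ℕ, par^[m] t = a) (hu : ∀ t, t ≠ a → 0 < u t) {θ : ℝ}
    (hθ : 1 < θ) (s : Γ) :
    ∑ t ∈ pathSet par a s, u t ^ (-q) * pathWeight par a u q t ^ (-(1 / θ))
      ≤ θ / (θ - 1) * pathWeight par a u q s ^ (1 - 1 / θ) := by
  set N := pathWeight par a u q
  set σ := 1 - 1 / θ
  have hσ0 : 0 < σ := sub_pos.2 ((div_lt_one (by linarith)).2 hθ)
  have hσ1 : σ ≤ 1 := sub_le_self 1 (by positivity)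
  have hc : θ / (θ - 1) = σ⁻¹ := by
    simp only [σ]
    field_simp
  calc ∑ t ∈ pathSet par a s, u t ^ (-q) * N t ^ (-(1 / θ))
      ≤ ∑ t ∈ pathSet par a s, σ⁻¹ * (N t ^ σ - N (par t) ^ σ) := by
        refine sum_le_sum fun t ht => (le_inv_mul_iff₀ hσ0).2 ?_
        have ht : t ≠ a := (mem_filter.1 ht).2.2
        rw [← pathWeight_sub_parent par a q hroot hreach ht, show -(1 / θ) = σ - 1 by ring,
          ← mul_assoc]
        exact mul_sub_mul_rpow_sub_one_le hσ0.le hσ1 (pathWeight_pos par a q hu ht)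
          (pathWeight_nonneg par a q hu _)
    _ = θ / (θ - 1) * N s ^ σ := by
        have hNa : N a = 0 := pathWeight_root par a q hroot
        rw [← mul_sum, sum_pathSet_sub_parent par a hroot hreach, hNa, zero_rpow hσ0.ne',
          sub_zero, hc]

lemma rpow_sum_pathSet_le (hroot : par a = a) (hreach : ∀ t, ∃ m : ℕ, par^[m] t = a)
    {p θ : ℝ} (hpq : p.HolderConjugate q) (hθ : 1 < θ) (hu : ∀ t, t ≠ a → 0 < u t)
    {d : Γ → ℝ} (hd : ∀ t, 0 ≤ d t) (s : Γ) :
    (∑ t ∈ pathSet par a s, d t) ^ p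
      ≤ (θ / (θ - 1)) ^ (p / q) * pathWeight par a u q s ^ ((p / q) * (1 - 1 / θ)) *
        ∑ t ∈ pathSet par a s, (d t * (u t * pathWeight par a u q t ^ (1 / (θ * q)))) ^ p := by
  set N := pathWeight par a u q
  have hθ0 : 0 < θ := by linarith
  have hw : ∀ t ∈ pathSet par a s, 0 < u t * N t ^ (1 / (θ * q)) := fun t ht =>
    have ht : t ≠ a := (mem_filter.1 ht).2.2
    mul_pos (hu t ht) (rpow_pos_of_pos (pathWeight_pos par a q hu ht) _)
  have hwq : ∀ t ∈ pathSet par a s,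
      (u t * N t ^ (1 / (θ * q))) ^ (-q) = u t ^ (-q) * N t ^ (-(1 / θ)) := fun t ht => by
    have ht : t ≠ a := (mem_filter.1 ht).2.2
    rw [mul_rpow (hu t ht).le (rpow_nonneg (pathWeight_nonneg par a q hu t) _),
      ← rpow_mul (pathWeight_nonneg par a q hu t)]
    congr 2
    field_simp [hpq.symm.ne_zero]
  calc (∑ t ∈ pathSet par a s, d t) ^ p
      ≤ (∑ t ∈ pathSet par a s, (d t * (u t * N t ^ (1 / (θ * q)))) ^ p) *
          (∑ t ∈ pathSet par a s, (u t * N t ^ (1 / (θ * q))) ^ (-q)) ^ (p / q) :=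
        rpow_sum_le_sum_mul_rpow_mul _ hpq (fun t _ => hd t) hw
    _ ≤ (∑ t ∈ pathSet par a s, (d t * (u t * N t ^ (1 / (θ * q)))) ^ p) *
          (θ / (θ - 1) * N s ^ (1 - 1 / θ)) ^ (p / q) := by
        rw [sum_congr rfl hwq]
        gcongr
        · exact sum_nonneg fun t ht => rpow_nonneg (mul_nonneg (hd t) (hw t ht).le) _
        · exact sum_nonneg fun t ht => hwq t ht ▸ (rpow_pos_of_pos (hw t ht) _).le
        · exact (div_pos hpq.pos hpq.symm.pos).le
        · exact sum_pathSet_mul_pathWeight_rpow_le par a q hroot hreach hu hθ s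
    _ = _ := by
        have hNs := pathWeight_nonneg par a q hu s
        rw [mul_rpow (div_pos hθ0 (by linarith)).le (rpow_nonneg hNs _), ← rpow_mul hNs,
          mul_comm (1 - 1 / θ)]
        ring

theorem sum_rpow_mul_sum_pathSet_le (hroot : par a = a) (hreach : ∀ t, ∃ m : ℕ, par^[m] t = a)
    {p θ : ℝ} (hpq : p.HolderConjugate q) (hθ : 1 < θ) {v : Γ → ℝ}
    (hu : ∀ t, t ≠ a → 0 < u t) (hv : ∀ t, t ≠ a → 0 < v t) {A : ℝ}
    (hA : ∀ t, t ≠ a → pathWeight par a u q t ^ (1 / (θ * q)) *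
      (∑ s ∈ shadowSet par a t,
        v s ^ p * pathWeight par a u q s ^ ((p / q) * (1 - 1 / θ))) ^ (1 / p) ≤ A)
    {d : Γ → ℝ} (hd : ∀ t, 0 ≤ d t) :
    ∑ s ∈ univ.filter (fun s => s ≠ a), (v s * ∑ t ∈ pathSet par a s, d t) ^ p
      ≤ (θ / (θ - 1)) ^ (p / q) * A ^ p *
        ∑ s ∈ univ.filter (fun s => s ≠ a), (d s * u s) ^ p := by
  set N := pathWeight par a u q
  set c := (θ / (θ - 1)) ^ (p / q)
  set B := fun t => ∑ s ∈ shadowSet par a t, v s ^ p * N s ^ ((p / q) * (1 - 1 / θ))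
  have hc : 0 ≤ c := rpow_nonneg (div_pos (by linarith) (by linarith)).le _
  have hNα : ∀ t, 0 ≤ N t ^ (1 / (θ * q)) := fun t =>
    rpow_nonneg (pathWeight_nonneg par a q hu t) _
  have hB : ∀ t, 0 ≤ B t := sum_shadowSet_nonneg par a q hu hv
  have hA_pow : ∀ t, t ≠ a → (N t ^ (1 / (θ * q))) ^ p * B t ≤ A ^ p := fun t ht => by
    have h := rpow_le_rpow (mul_nonneg (hNα t) (rpow_nonneg (hB t) _)) (hA t ht) hpq.nonneg
    rwa [mul_rpow (hNα t) (rpow_nonneg (hB t) _), ← rpow_mul (hB t),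
      one_div_mul_cancel hpq.ne_zero, rpow_one] at h
  calc ∑ s ∈ univ.filter (fun s => s ≠ a), (v s * ∑ t ∈ pathSet par a s, d t) ^ p
      ≤ ∑ s ∈ univ.filter (fun s => s ≠ a), ∑ t ∈ pathSet par a s,
          c * (v s ^ p * N s ^ ((p / q) * (1 - 1 / θ))) *
            (d t * (u t * N t ^ (1 / (θ * q)))) ^ p := by
        refine sum_le_sum fun s hs => ?_
        have hvs := (hv s (mem_filter.1 hs).2).le
        rw [mul_rpow hvs (sum_nonneg fun t _ => hd t)]
        calc v s ^ p * (∑ t ∈ pathSet par a s, d t) ^ p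
            ≤ v s ^ p * (c * N s ^ ((p / q) * (1 - 1 / θ)) *
                ∑ t ∈ pathSet par a s, (d t * (u t * N t ^ (1 / (θ * q)))) ^ p) :=
              mul_le_mul_of_nonneg_left (rpow_sum_pathSet_le par a q hroot hreach hpq hθ hu hd s)
                (rpow_nonneg hvs _)
          _ = _ := by rw [mul_sum, mul_sum]; exact sum_congr rfl fun t _ => by ring
    _ = ∑ t ∈ univ.filter (fun t => t ≠ a), ∑ s ∈ shadowSet par a t,
          c * (v s ^ p * N s ^ ((p / q) * (1 - 1 / θ))) *
            (d t * (u t * N t ^ (1 / (θ * q)))) ^ p := sum_sum_pathSet_comm par a _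
    _ = ∑ t ∈ univ.filter (fun t => t ≠ a),
          c * (d t * u t) ^ p * ((N t ^ (1 / (θ * q))) ^ p * B t) := by
        refine sum_congr rfl fun t ht => ?_
        rw [← sum_mul, ← mul_sum, ← mul_assoc,
          mul_rpow (mul_nonneg (hd t) (hu t (mem_filter.1 ht).2).le) (hNα t)]
        ring
    _ ≤ ∑ t ∈ univ.filter (fun t => t ≠ a), c * (d t * u t) ^ p * A ^ p := by
        refine sum_le_sum fun t ht => mul_le_mul_of_nonneg_left (hA_pow t (mem_filter.1 ht).2) ?_
        exact mul_nonneg hc (rpow_nonneg (mul_nonneg (hd t) (hu t (mem_filter.1 ht).2).le) _)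
    _ = c * A ^ p * ∑ s ∈ univ.filter (fun s => s ≠ a), (d s * u s) ^ p := by
        rw [mul_sum]; exact sum_congr rfl fun t _ => by ring

end Hardy

theorem stmt3_general {Γ : Type*} [Fintype Γ] (a : Γ) (par : Γ → Γ)
    (hroot : par a = a) (hreach : ∀ t, ∃ m : ℕ, par^[m] t = a)
    (p q θ : ℝ) (hp : 1 < p) (hpq : 1 / p + 1 / q = 1) (hθ : 1 < θ)
    (u v : Γ → ℝ) (hu : ∀ t, t ≠ a → 0 < u t) (hv : ∀ t, t ≠ a → 0 < v t)
    (A : ℝ)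
    (hA : ∀ t, t ≠ a →
      (∑ s ∈ Finset.univ.filter (fun s => treeLe par s t ∧ s ≠ a), u s ^ (-q)) ^ (1 / (θ * q)) *
        (∑ s ∈ Finset.univ.filter (fun s => treeLe par t s ∧ s ≠ a),
            v s ^ p *
              (∑ r ∈ Finset.univ.filter (fun r => treeLe par r s ∧ r ≠ a), u r ^ (-q)) ^
                ((p / q) * (1 - 1 / θ))) ^ (1 / p)
      ≤ A)
    (d : Γ → ℝ) (hd : ∀ t, 0 ≤ d t) :
    (∑ s ∈ Finset.univ.filter (fun s => s ≠ a),
        (v s * ∑ t ∈ Finset.univ.filter (fun t => treeLe par t s ∧ t ≠ a), d t) ^ p) ^ (1 / p)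
      ≤ (θ / (θ - 1)) ^ (1 / q) * A *
        (∑ s ∈ Finset.univ.filter (fun s => s ≠ a), (d s * u s) ^ p) ^ (1 / p) := by
  have hpq' : p.HolderConjugate q := by
    rw [Real.holderConjugate_iff, ← one_div, ← one_div]; exact ⟨hp, hpq⟩
  have hpow := sum_rpow_mul_sum_pathSet_le par a q hroot hreach hpq' hθ hu hv hA hd
  set G := univ.filter fun s => s ≠ a
  rcases G.eq_empty_or_nonempty with hG | ⟨t₀, ht₀⟩
  · simp [hG, zero_rpow (inv_ne_zero hpq'.ne_zero)]
  have hA₀ : 0 ≤ A := (mul_nonneg (rpow_nonneg (pathWeight_nonneg par a q hu t₀) _)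
    (rpow_nonneg (sum_shadowSet_nonneg par a q hu hv t₀) _)).trans
    (hA t₀ (mem_filter.1 ht₀).2)
  have hL : 0 ≤ ∑ s ∈ G, (v s * ∑ t ∈ pathSet par a s, d t) ^ p := sum_nonneg fun s hs =>
    rpow_nonneg (mul_nonneg (hv s (mem_filter.1 hs).2).le (sum_nonneg fun t _ => hd t)) _
  have hR : 0 ≤ ∑ s ∈ G, (d s * u s) ^ p := sum_nonneg fun s hs =>
    rpow_nonneg (mul_nonneg (hd s) (hu s (mem_filter.1 hs).2).le) _
  have hc : 0 ≤ θ / (θ - 1) := (div_pos (by linarith) (by linarith)).le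
  refine (rpow_le_rpow hL hpow (one_div_nonneg.2 hpq'.nonneg)).trans_eq ?_
  rw [mul_rpow (by positivity) hR, mul_rpow (by positivity) (by positivity), ← rpow_mul hc,
    ← rpow_mul hA₀, mul_one_div_cancel hpq'.ne_zero, rpow_one,
    show p / q * (1 / p) = 1 / q by field_simp [hpq'.ne_zero]]

theorem stmt3 {Γ : Type*} [Fintype Γ] (a : Γ) (par : Γ → Γ)
    (hroot : par a = a) (hreach : ∀ t, ∃ m : ℕ, par^[m] t = a)
    (p q θ : ℝ) (hp : 1 < p) (hq : 1 < q) (hpq : 1 / p + 1 / q = 1) (hθ : 1 < θ)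
    (u v : Γ → ℝ) (hu : ∀ t, t ≠ a → 0 < u t) (hv : ∀ t, t ≠ a → 0 < v t)
    (A : ℝ)
    (hA : ∀ t, t ≠ a →
      (∑ s ∈ Finset.univ.filter (fun s => treeLe par s t ∧ s ≠ a), u s ^ (-q)) ^ (1 / (θ * q)) *
        (∑ s ∈ Finset.univ.filter (fun s => treeLe par t s ∧ s ≠ a),
            v s ^ p *
              (∑ r ∈ Finset.univ.filter (fun r => treeLe par r s ∧ r ≠ a), u r ^ (-q)) ^
                ((p / q) * (1 - 1 / θ))) ^ (1 / p)
      ≤ A)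
    (d : Γ → ℝ) (hd : ∀ t, 0 ≤ d t) :
    (∑ s ∈ Finset.univ.filter (fun s => s ≠ a),
        (v s * ∑ t ∈ Finset.univ.filter (fun t => treeLe par t s ∧ t ≠ a), d t) ^ p) ^ (1 / p)
      ≤ (θ / (θ - 1)) ^ (1 / q) * A *
        (∑ s ∈ Finset.univ.filter (fun s => s ≠ a), (d s * u s) ^ p) ^ (1 / p) :=
  stmt3_general a par hroot hreach p q θ hp hpq hθ u v hu hv A hA d hd
end

section
/- Let $\Gamma$ be a finite rooted tree with root $a$ and $\Gamma^*=\Gamma\setminus\{a\}$, let $1<p,q<\infty$ with $1/p+1/q=1$, and let $(u_t),(v_t)$ be positive weights on $\Gamma^*$. If for every nonnegative family $(b_t)_{t\in\Gamma^*}$ the inequality $\big(\sum_{t\in\Gamma^*}(u_t^{-1}\sum_{s\succeq t}b_s)^q\big)^{1/q}\le C\big(\sum_{t\in\Gamma^*}(b_t v_t^{-1})^q\big)^{1/q}$ holds, then $\sup_{t\in\Gamma^*}\big(\sum_{a\prec s\preceq t} u_s^{-q}\big)^{1/q}\big(\sum_{s\succeq t} v_s^p\big)^{1/p}\le C'$ for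 a constant $C'$ proportional to $C$ (indeed $C'=C$ works). -/
open Finset
open scoped Classical

theorem treeLe_refl {Γ : Type*} (par : Γ → Γ) (t : Γ) : treeLe par t t := ⟨0, rfl⟩

theorem treeLe_trans {Γ : Type*} (par : Γ → Γ) {s t r : Γ}
    (h1 : treeLe par s t) (h2 : treeLe par t r) : treeLe par s r := by
  obtain ⟨m, hm⟩ := h1
  obtain ⟨n, hn⟩ := h2
  exact ⟨m + n, by rw [Function.iterate_add_apply, hn, hm]⟩

theorem stmt5 {Γ : Type*} [Fintype Γ] (a : Γ) (par : Γ → Γ)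
    (hroot : par a = a) (hreach : ∀ t, ∃ m : ℕ, par^[m] t = a)
    (p q : ℝ) (hp : 1 < p) (hq : 1 < q) (hpq : 1 / p + 1 / q = 1)
    (u v : Γ → ℝ) (hu : ∀ t, t ≠ a → 0 < u t) (hv : ∀ t, t ≠ a → 0 < v t)
    (C : ℝ)
    (hH : ∀ b : Γ → ℝ, (∀ t, 0 ≤ b t) →
      (∑ t ∈ Finset.univ.filter (fun t => t ≠ a),
          ((u t)⁻¹ * ∑ s ∈ Finset.univ.filter (fun s => treeLe par t s ∧ s ≠ a), b s) ^ q) ^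
          (1 / q)
        ≤ C * (∑ t ∈ Finset.univ.filter (fun t => t ≠ a), (b t * (v t)⁻¹) ^ q) ^ (1 / q)) :
    ∀ t, t ≠ a →
      (∑ s ∈ Finset.univ.filter (fun s => treeLe par s t ∧ s ≠ a), u s ^ (-q)) ^ (1 / q) *
        (∑ s ∈ Finset.univ.filter (fun s => treeLe par t s ∧ s ≠ a), v s ^ p) ^ (1 / p)
      ≤ C := by
  intro t ht
  have hq0 : (0:ℝ) < q := lt_trans one_pos hq
  have hq0' : q ≠ 0 := ne_of_gt hq0
  set P : Finset Γ := Finset.univ.filter (fun s => treeLe par s t ∧ s ≠ a) with hP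
  set S : Finset Γ := Finset.univ.filter (fun s => treeLe par t s ∧ s ≠ a) with hS
  set V : ℝ := ∑ s ∈ S, v s ^ p with hVdef
  set U : ℝ := ∑ s ∈ P, u s ^ (-q) with hUdef
  have htS : t ∈ S := by simp [hS, treeLe_refl, ht]
  have htP : t ∈ P := by simp [hP, treeLe_refl, ht]
  have hvpos : ∀ s ∈ S, 0 < v s ^ p := by
    intro s hs
    rw [hS, Finset.mem_filter] at hs
    exact Real.rpow_pos_of_pos (hv s hs.2.2) p
  have hV : 0 < V :=
    Finset.sum_pos' (fun s hs => le_of_lt (hvpos s hs)) ⟨t, htS, hvpos t htS⟩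
  have hU : 0 < U := by
    refine Finset.sum_pos' (fun s hs => ?_) ⟨t, htP, ?_⟩
    · exact Real.rpow_nonneg (le_of_lt (hu s (Finset.mem_filter.mp hs).2.2)) _
    · exact Real.rpow_pos_of_pos (hu t ht) _
  -- the test family
  set b : Γ → ℝ := fun s => if s ∈ S then v s ^ p else 0 with hbdef
  have hb : ∀ s, 0 ≤ b s := by
    intro s
    by_cases hs : s ∈ S
    · simpa [hbdef, hs] using le_of_lt (hvpos s hs)
    · simp [hbdef, hs]
  have key := hH b hb
  -- RHS computation
  have hSsub : S ⊆ Finset.univ.filter (fun s => s ≠ a) := by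
    intro s hs
    rw [hS, Finset.mem_filter] at hs
    simp [hs.2.2]
  have hRHS : (∑ s ∈ Finset.univ.filter (fun s => s ≠ a), (b s * (v s)⁻¹) ^ q) = V := by
    rw [hVdef]
    rw [← Finset.sum_subset hSsub (by
      intro x _ hx
      simp [hbdef, hx, Real.zero_rpow hq0'])]
    refine Finset.sum_congr rfl (fun s hs => ?_)
    have hvs : 0 < v s := hv s (Finset.mem_filter.mp hs).2.2
    rw [hbdef]
    simp only [hs, if_pos]
    rw [← Real.rpow_neg_one (v s), ← Real.rpow_add hvs, ← Real.rpow_mul (le_of_lt hvs)]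
    congr 1
    have hp0 : p ≠ 0 := ne_of_gt (lt_trans one_pos hp)
    field_simp at hpq
    nlinarith [hpq]
  -- LHS lower bound
  have hPsub : P ⊆ Finset.univ.filter (fun s => s ≠ a) := by
    intro s hs
    rw [hP, Finset.mem_filter] at hs
    simp [hs.2.2]
  have hLHS : U * V ^ q ≤
      ∑ s ∈ Finset.univ.filter (fun s => s ≠ a),
        ((u s)⁻¹ * ∑ r ∈ Finset.univ.filter (fun r => treeLe par s r ∧ r ≠ a), b r) ^ q := by
    have h1 : ∑ s ∈ P, u s ^ (-q) * V ^ q ≤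
        ∑ s ∈ P, ((u s)⁻¹ * ∑ r ∈ Finset.univ.filter (fun r => treeLe par s r ∧ r ≠ a), b r) ^ q := by
      refine Finset.sum_le_sum (fun s hs => ?_)
      rw [hP, Finset.mem_filter] at hs
      have hus : 0 < u s := hu s hs.2.2
      have hsub : S ⊆ Finset.univ.filter (fun r => treeLe par s r ∧ r ≠ a) := by
        intro r hr
        rw [hS, Finset.mem_filter] at hr
        exact Finset.mem_filter.mpr ⟨Finset.mem_univ r,
          treeLe_trans par hs.2.1 hr.2.1, hr.2.2⟩
      have hVle : V ≤ ∑ r ∈ Finset.univ.filter (fun r => treeLe par s r ∧ r ≠ a), b r := by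
        have : V = ∑ r ∈ S, b r := by
          refine Finset.sum_congr rfl (fun r hr => ?_)
          simp [hbdef, hr]
        rw [this]
        exact Finset.sum_le_sum_of_subset_of_nonneg hsub (fun r _ _ => hb r)
      calc u s ^ (-q) * V ^ q = ((u s)⁻¹ * V) ^ q := by
            rw [Real.mul_rpow (inv_nonneg.mpr (le_of_lt hus)) (le_of_lt hV),
              Real.rpow_neg (le_of_lt hus), ← Real.inv_rpow (le_of_lt hus)]
        _ ≤ ((u s)⁻¹ * ∑ r ∈ Finset.univ.filter (fun r => treeLe par s r ∧ r ≠ a), b r) ^ q := by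
            refine Real.rpow_le_rpow (by positivity) ?_ (le_of_lt hq0)
            exact mul_le_mul_of_nonneg_left hVle (inv_nonneg.mpr (le_of_lt hus))
    calc U * V ^ q = ∑ s ∈ P, u s ^ (-q) * V ^ q := by rw [hUdef, Finset.sum_mul]
      _ ≤ _ := h1.trans (Finset.sum_le_sum_of_subset_of_nonneg hPsub (fun s hs _ => by
          exact Real.rpow_nonneg (mul_nonneg (inv_nonneg.mpr
            (le_of_lt (hu s (Finset.mem_filter.mp hs).2)))
            (Finset.sum_nonneg fun r _ => hb r)) q))
  -- combine
  have hmain : U ^ (1/q) * V ≤ C * V ^ (1/q) := by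
    have h2 : (U * V ^ q) ^ (1/q) ≤ C * V ^ (1/q) := by
      rw [hRHS] at key
      refine le_trans ?_ key
      exact Real.rpow_le_rpow (by positivity) hLHS (by positivity)
    rwa [Real.mul_rpow (le_of_lt hU) (by positivity),
      ← Real.rpow_mul (le_of_lt hV), mul_one_div, div_self hq0', Real.rpow_one] at h2
  have hVq : 0 < V ^ (1/q) := Real.rpow_pos_of_pos hV _
  rw [← div_le_iff₀ hVq] at hmain
  have hVp : V ^ (1/p) = V / V ^ (1/q) := by
    rw [eq_div_iff (ne_of_gt hVq), ← Real.rpow_add hV, hpq, Real.rpow_one]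
  calc U ^ (1/q) * V ^ (1/p) = U ^ (1/q) * V / V ^ (1/q) := by rw [hVp, mul_div_assoc]
    _ ≤ C := hmain
end

section
/- Let $\Omega\subset\mathbb{R}^n$ be a bounded domain, $1<q<\infty$, $\beta\in\mathbb{R}$ with $d^{\beta p}\in L^1(\Omega)$ where $p$ is the conjugate exponent of $q$ and $d(x)=\mathrm{dist}(x,\partial\Omega)$. Define $V$ as the set of functions of the form $g + \psi d^{\beta p}$ where $\psi\in\mathbb{R}$ and $g\in L^q(\Omega,d^{-\beta q})$ has compact support in $\Omega$ (closure of the support contained in $\Omega$) and $\int_\Omega g=0$. Then $V$ is dense in $L^q(\Omega,d^{-\beta q})$. -/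
/-!
For a compact `K ⊆ Ω`, put `c_K = ∫_K F / ∫_K d^{βp}` and `g = 𝟙_K (F - c_K d^{βp})`. Then `g` has
compact support in `Ω` and mean zero, and `F - (g + c_K d^{βp}) = 𝟙_{Ω \ K} (F - c_K d^{βp})`. Since
`(d^{βp})^q d^{-βq} = d^{βp}`, its weighted `q`-th power integral is at most
`2^{q-1} (∫_{Ω \ K} |F|^q d^{-βq} + |c_K|^q ∫_{Ω \ K} d^{βp})`. Young's inequality
`|F| ≤ |F|^q d^{-βq} / q + d^{βp} / p` makes `F` integrable, so along compact sets exhausting `Ω`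
in measure `c_K` converges to `∫_Ω F / ∫_Ω d^{βp}` while both tails tend to zero.
-/

open MeasureTheory Filter Topology Set
open scoped ENNReal

lemma Real.rpow_add_le_mul_rpow_add_rpow {a b q : ℝ} (ha : 0 ≤ a) (hb : 0 ≤ b) (hq : 1 ≤ q) :
    (a + b) ^ q ≤ 2 ^ (q - 1) * (a ^ q + b ^ q) := by
  lift a to NNReal using ha
  lift b to NNReal using hb
  exact_mod_cast NNReal.rpow_add_le_mul_rpow_add_rpow a b hq

lemma sub_indicator_sub_add_eq_indicator_compl {E : Type*} {K : Set E} (f h : E → ℝ) (x : E) :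
    f x - (K.indicator (fun x => f x - h x) x + h x) = Kᶜ.indicator (fun x => f x - h x) x := by
  by_cases hx : x ∈ K <;> simp [hx]

lemma abs_indicator_rpow_mul {E : Type*} {K : Set E} {q : ℝ} (hq : q ≠ 0) (f w : E → ℝ) :
    (fun x => |K.indicator f x| ^ q * w x) = K.indicator fun x => |f x| ^ q * w x := by
  ext x
  by_cases hx : x ∈ K <;> simp [hx, Real.zero_rpow hq]

namespace Real.HolderConjugate

variable {p q : ℝ}

lemma le_rpow_mul_rpow_div_add_rpow_div (hpq : p.HolderConjugate q) {a t : ℝ} (ha : 0 ≤ a)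
    (ht : 0 < t) (β : ℝ) : a ≤ a ^ q * t ^ (-β * q) / q + t ^ (β * p) / p := by
  have hab : a * t ^ (-β) * t ^ β = a := by
    rw [mul_assoc, ← Real.rpow_add ht, neg_add_cancel, Real.rpow_zero, mul_one]
  have := Real.young_inequality_of_nonneg (mul_nonneg ha (Real.rpow_nonneg ht.le (-β)))
    (Real.rpow_nonneg ht.le β) hpq.symm
  rwa [hab, Real.mul_rpow ha (Real.rpow_nonneg ht.le _), ← Real.rpow_mul ht.le,
    ← Real.rpow_mul ht.le] at this

lemma rpow_rpow_mul_rpow_neg_mul (hpq : p.HolderConjugate q) {t : ℝ} (ht : 0 < t) (β : ℝ) :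
    (t ^ (β * p)) ^ q * t ^ (-β * q) = t ^ (β * p) := by
  rw [← Real.rpow_mul ht.le, ← Real.rpow_add ht]
  congr 1
  linear_combination β * hpq.mul_eq_add

lemma abs_sub_mul_rpow_rpow_mul_le (hpq : p.HolderConjugate q) {t : ℝ} (ht : 0 < t) (a c β : ℝ) :
    |a - c * t ^ (β * p)| ^ q * t ^ (-β * q) ≤
      2 ^ (q - 1) * (|a| ^ q * t ^ (-β * q) + |c| ^ q * t ^ (β * p)) := by
  have hu : 0 ≤ t ^ (β * p) := Real.rpow_nonneg ht.le _
  have htri : |a - c * t ^ (β * p)| ≤ |a| + |c| * t ^ (β * p) := by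
    simpa [abs_mul, abs_of_nonneg hu] using abs_sub a (c * t ^ (β * p))
  calc |a - c * t ^ (β * p)| ^ q * t ^ (-β * q)
      ≤ (2 ^ (q - 1) * (|a| ^ q + (|c| * t ^ (β * p)) ^ q)) * t ^ (-β * q) := by
        gcongr
        exact (Real.rpow_le_rpow (abs_nonneg _) htri hpq.symm.nonneg).trans
          (Real.rpow_add_le_mul_rpow_add_rpow (abs_nonneg _) (by positivity) hpq.symm.lt.le)
    _ = 2 ^ (q - 1) * (|a| ^ q * t ^ (-β * q) + |c| ^ q * t ^ (β * p)) := by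
        rw [Real.mul_rpow (abs_nonneg c) hu]
        linear_combination 2 ^ (q - 1) * |c| ^ q * hpq.rpow_rpow_mul_rpow_neg_mul ht β

end Real.HolderConjugate

section Exhaustion

variable {E : Type*} [MeasurableSpace E] {μ : Measure E} {Ω : Set E}

lemma exists_seq_isCompact_tendsto_measure_sdiff [TopologicalSpace E] [T2Space E]
    [OpensMeasurableSpace E] [μ.InnerRegularCompactLTTop] (hΩ : MeasurableSet Ω)
    (hΩμ : μ Ω ≠ ∞) :
    ∃ K : ℕ → Set E, (∀ m, IsCompact (K m) ∧ K m ⊆ Ω) ∧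
      Tendsto (fun m => μ (Ω \ K m)) atTop (𝓝 0) := by
  choose K hKΩ hK hKμ using fun m : ℕ =>
    hΩ.exists_isCompact_sdiff_lt hΩμ (ENNReal.inv_ne_zero.2 (ENNReal.natCast_ne_top m))
  exact ⟨K, fun m => ⟨hK m, hKΩ m⟩, tendsto_of_tendsto_of_tendsto_of_le_of_le tendsto_const_nhds
    ENNReal.tendsto_inv_nat_nhds_zero (fun _ => zero_le) fun m => (hKμ m).le⟩

section Tendsto

variable {G ι : Type*} [NormedAddCommGroup G] [NormedSpace ℝ G] {l : Filter ι} {K : ι → Set E}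
  {f : E → G}

lemma tendsto_setIntegral_sdiff_nhds_zero (hf : IntegrableOn f Ω μ)
    (hK : Tendsto (fun i => μ (Ω \ K i)) l (𝓝 0)) :
    Tendsto (fun i => ∫ x in Ω \ K i, f x ∂μ) l (𝓝 0) := by
  have hKΩ : Tendsto (fun i => μ.restrict Ω (Ω \ K i)) l (𝓝 0) :=
    tendsto_of_tendsto_of_tendsto_of_le_of_le tendsto_const_nhds hK (fun _ => zero_le)
      fun _ => Measure.restrict_apply_le _ _
  simpa only [Measure.restrict_restrict_of_subset sdiff_subset] using
    hf.tendsto_setIntegral_nhds_zero hKΩ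

lemma tendsto_setIntegral_of_tendsto_measure_sdiff (hf : IntegrableOn f Ω μ)
    (hKm : ∀ i, MeasurableSet (K i)) (hKΩ : ∀ i, K i ⊆ Ω)
    (hK : Tendsto (fun i => μ (Ω \ K i)) l (𝓝 0)) :
    Tendsto (fun i => ∫ x in K i, f x ∂μ) l (𝓝 (∫ x in Ω, f x ∂μ)) := by
  have := (tendsto_setIntegral_sdiff_nhds_zero hf hK).const_sub (∫ x in Ω, f x ∂μ)
  simpa only [setIntegral_sdiff (hKm _) hf (hKΩ _), sub_sub_cancel, sub_zero] using this

end Tendsto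

lemma setIntegral_pos_of_forall_pos {f : E → ℝ} (hΩ : MeasurableSet Ω) (hΩ0 : μ Ω ≠ 0)
    (hf : IntegrableOn f Ω μ) (hpos : ∀ x ∈ Ω, 0 < f x) : 0 < ∫ x in Ω, f x ∂μ := by
  rw [setIntegral_pos_iff_support_of_nonneg_ae
    ((ae_restrict_iff' hΩ).2 (.of_forall fun x hx => (hpos x hx).le)) hf]
  exact (pos_iff_ne_zero.2 hΩ0).trans_le (measure_mono fun x hx => ⟨(hpos x hx).ne', hx⟩)

lemma setIntegral_sub_div_mul_eq_zero {K : Set E} {F w : E → ℝ} (hF : IntegrableOn F K μ)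
    (hw : IntegrableOn w K μ) (hw0 : ∫ x in K, w x ∂μ ≠ 0) :
    ∫ x in K, F x - (∫ y in K, F y ∂μ) / (∫ y in K, w y ∂μ) * w x ∂μ = 0 := by
  rw [integral_sub hF (hw.const_mul _), integral_const_mul, div_mul_cancel₀ _ hw0, sub_self]

lemma exists_isCompact_setIntegral_sdiff_add_lt [TopologicalSpace E] [T2Space E]
    [OpensMeasurableSpace E] [μ.InnerRegularCompactLTTop] (hΩ : MeasurableSet Ω)
    (hΩμ : μ Ω ≠ ∞) {F T w : E → ℝ} (hF : IntegrableOn F Ω μ) (hT : IntegrableOn T Ω μ)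
    (hw : IntegrableOn w Ω μ) (hw0 : ∫ x in Ω, w x ∂μ ≠ 0) {q : ℝ} (hq : 0 < q) {η : ℝ}
    (hη : 0 < η) :
    ∃ K, IsCompact K ∧ K ⊆ Ω ∧ ∫ x in K, w x ∂μ ≠ 0 ∧
      ∫ x in Ω \ K, T x ∂μ +
        |(∫ x in K, F x ∂μ) / ∫ x in K, w x ∂μ| ^ q * ∫ x in Ω \ K, w x ∂μ < η := by
  obtain ⟨K, hK, hlim⟩ := exists_seq_isCompact_tendsto_measure_sdiff hΩ hΩμ
  have hKm m : MeasurableSet (K m) := (hK m).1.isClosed.measurableSet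
  have hwK := tendsto_setIntegral_of_tendsto_measure_sdiff hw hKm (fun m => (hK m).2) hlim
  have hFK := tendsto_setIntegral_of_tendsto_measure_sdiff hF hKm (fun m => (hK m).2) hlim
  have htail : Tendsto (fun m => ∫ x in Ω \ K m, T x ∂μ +
      |(∫ x in K m, F x ∂μ) / ∫ x in K m, w x ∂μ| ^ q * ∫ x in Ω \ K m, w x ∂μ) atTop (𝓝 0) := by
    simpa using (tendsto_setIntegral_sdiff_nhds_zero hT hlim).add
      (((hFK.div hwK hw0).abs.rpow_const (Or.inr hq.le)).mul
        (tendsto_setIntegral_sdiff_nhds_zero hw hlim))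
  obtain ⟨m, hm0, hmη⟩ := ((hwK.eventually_ne hw0).and (htail.eventually (gt_mem_nhds hη))).exists
  exact ⟨K m, (hK m).1, (hK m).2, hm0, hmη⟩

end Exhaustion

section Weighted

variable {E : Type*} [MeasurableSpace E] {μ : Measure E} {Ω : Set E} {p q β : ℝ} {d F : E → ℝ}

lemma integrableOn_of_integrableOn_abs_rpow_mul (hpq : p.HolderConjugate q)
    (hΩ : MeasurableSet Ω) (hdpos : ∀ x ∈ Ω, 0 < d x)
    (hu : IntegrableOn (fun x => d x ^ (β * p)) Ω μ) (hF : AEStronglyMeasurable F (μ.restrict Ω))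
    (hFq : IntegrableOn (fun x => |F x| ^ q * d x ^ (-β * q)) Ω μ) : IntegrableOn F Ω μ :=
  Integrable.mono' ((hFq.div_const q).add (hu.div_const p)) hF <|
    (ae_restrict_iff' hΩ).2 <| .of_forall fun x hx =>
      hpq.le_rpow_mul_rpow_div_add_rpow_div (abs_nonneg (F x)) (hdpos x hx) β

lemma integrableOn_abs_sub_mul_rpow_rpow_mul (hpq : p.HolderConjugate q)
    (hΩ : MeasurableSet Ω) (hdpos : ∀ x ∈ Ω, 0 < d x) (hd : AEMeasurable d (μ.restrict Ω))
    (hu : IntegrableOn (fun x => d x ^ (β * p)) Ω μ) (hF : AEMeasurable F (μ.restrict Ω))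
    (hFq : IntegrableOn (fun x => |F x| ^ q * d x ^ (-β * q)) Ω μ) (c : ℝ) :
    IntegrableOn (fun x => |F x - c * d x ^ (β * p)| ^ q * d x ^ (-β * q)) Ω μ := by
  refine Integrable.mono' ((hFq.add (hu.const_mul (|c| ^ q))).const_mul (2 ^ (q - 1))) ?_ <|
    (ae_restrict_iff' hΩ).2 <| .of_forall fun x hx => ?_
  · exact ((((hF.sub ((hd.pow_const _).const_mul c)).abs).pow_const q).mul
      (hd.pow_const _)).aestronglyMeasurable
  · rw [Real.norm_of_nonneg (by have := hdpos x hx; positivity)]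
    exact hpq.abs_sub_mul_rpow_rpow_mul_le (hdpos x hx) _ _ _

lemma setIntegral_abs_sub_mul_rpow_rpow_mul_le (hpq : p.HolderConjugate q)
    (hΩ : MeasurableSet Ω) (hdpos : ∀ x ∈ Ω, 0 < d x) (hd : AEMeasurable d (μ.restrict Ω))
    (hu : IntegrableOn (fun x => d x ^ (β * p)) Ω μ) (hF : AEMeasurable F (μ.restrict Ω))
    (hFq : IntegrableOn (fun x => |F x| ^ q * d x ^ (-β * q)) Ω μ) (c : ℝ) {s : Set E}
    (hs : MeasurableSet s) (hsΩ : s ⊆ Ω) :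
    ∫ x in s, |F x - c * d x ^ (β * p)| ^ q * d x ^ (-β * q) ∂μ ≤
      2 ^ (q - 1) * (∫ x in s, |F x| ^ q * d x ^ (-β * q) ∂μ +
        |c| ^ q * ∫ x in s, d x ^ (β * p) ∂μ) := by
  rw [← integral_const_mul, ← integral_add (hFq.mono_set hsΩ) ((hu.mono_set hsΩ).const_mul _),
    ← integral_const_mul]
  exact setIntegral_mono_on
    ((integrableOn_abs_sub_mul_rpow_rpow_mul hpq hΩ hdpos hd hu hF hFq c).mono_set hsΩ)
    (IntegrableOn.mono_set ((hFq.add (hu.const_mul _)).const_mul _) hsΩ) hs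
    fun x hx => hpq.abs_sub_mul_rpow_rpow_mul_le (hdpos x (hsΩ hx)) _ _ _

end Weighted

theorem exists_meanZero_add_mul_rpow_approx {E : Type*} [TopologicalSpace E] [T2Space E]
    [MeasurableSpace E] [OpensMeasurableSpace E] {μ : Measure E} [μ.InnerRegularCompactLTTop]
    {Ω : Set E} {p q β : ℝ} {d F : E → ℝ} (hpq : p.HolderConjugate q) (hΩ : MeasurableSet Ω)
    (hΩμ : μ Ω ≠ ∞) (hΩ0 : μ Ω ≠ 0) (hdpos : ∀ x ∈ Ω, 0 < d x)
    (hd : AEMeasurable d (μ.restrict Ω)) (hu : IntegrableOn (fun x => d x ^ (β * p)) Ω μ)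
    (hF : AEMeasurable F (μ.restrict Ω))
    (hFq : IntegrableOn (fun x => |F x| ^ q * d x ^ (-β * q)) Ω μ) {ε : ℝ} (hε : 0 < ε) :
    ∃ (g : E → ℝ) (ψ : ℝ), AEMeasurable g (μ.restrict Ω) ∧
      IntegrableOn (fun x => |g x| ^ q * d x ^ (-β * q)) Ω μ ∧
      closure (Function.support g) ⊆ Ω ∧ ∫ x in Ω, g x ∂μ = 0 ∧
      (∫ x in Ω, |F x - (g x + ψ * d x ^ (β * p))| ^ q * d x ^ (-β * q) ∂μ) ^ (1 / q) < ε := by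
  have hq := hpq.symm.pos
  have hFi := integrableOn_of_integrableOn_abs_rpow_mul hpq hΩ hdpos hu hF.aestronglyMeasurable hFq
  have hu0 := setIntegral_pos_of_forall_pos hΩ hΩ0 hu fun x hx =>
    Real.rpow_pos_of_pos (hdpos x hx) _
  obtain ⟨K, hK, hKΩ, hKu, htail⟩ := exists_isCompact_setIntegral_sdiff_add_lt hΩ hΩμ hFi hFq hu
    hu0.ne' hq (div_pos (Real.rpow_pos_of_pos hε q) (Real.rpow_pos_of_pos two_pos (q - 1)))
  have hKm := hK.isClosed.measurableSet
  set c := (∫ x in K, F x ∂μ) / ∫ x in K, d x ^ (β * p) ∂μ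
  refine ⟨K.indicator fun x => F x - c * d x ^ (β * p), c, ?_, ?_, ?_, ?_, ?_⟩
  · exact (hF.sub ((hd.pow_const _).const_mul c)).indicator hKm
  · rw [abs_indicator_rpow_mul hq.ne']
    exact (integrableOn_abs_sub_mul_rpow_rpow_mul hpq hΩ hdpos hd hu hF hFq c).indicator hKm
  · exact (closure_minimal support_indicator_subset hK.isClosed).trans hKΩ
  · rw [setIntegral_indicator hKm, inter_eq_right.2 hKΩ]
    exact setIntegral_sub_div_mul_eq_zero (hFi.mono_set hKΩ) (hu.mono_set hKΩ) hKu
  · rw [one_div, Real.rpow_inv_lt_iff_of_pos (setIntegral_nonneg hΩ fun x hx => by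
      have := hdpos x hx; positivity) hε.le hq]
    simp only [sub_indicator_sub_add_eq_indicator_compl, abs_indicator_rpow_mul hq.ne']
    rw [setIntegral_indicator hKm.compl, ← sdiff_eq]
    calc _ ≤ _ := setIntegral_abs_sub_mul_rpow_rpow_mul_le hpq hΩ hdpos hd hu hF hFq c
          (hΩ.diff hKm) sdiff_subset
      _ < ε ^ q := (lt_div_iff₀' (Real.rpow_pos_of_pos two_pos (q - 1))).1 htail

theorem stmt9_general {n : ℕ} (Ω : Set (EuclideanSpace ℝ (Fin n)))
    (hΩo : IsOpen Ω) (hΩb : Bornology.IsBounded Ω) (hΩne : Ω.Nonempty)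
    (p q β : ℝ) (hq : 1 < q) (hpq : 1 / p + 1 / q = 1)
    (d : EuclideanSpace ℝ (Fin n) → ℝ)
    (hd : d = fun x => Metric.infDist x (frontier Ω))
    (hw : IntegrableOn (fun x => d x ^ (β * p)) Ω) :
    ∀ F : EuclideanSpace ℝ (Fin n) → ℝ,
      AEMeasurable F (volume.restrict Ω) →
      IntegrableOn (fun x => |F x| ^ q * d x ^ (-β * q)) Ω →
      ∀ ε : ℝ, 0 < ε →
        ∃ (g : EuclideanSpace ℝ (Fin n) → ℝ) (ψ : ℝ),
          AEMeasurable g (volume.restrict Ω) ∧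
          IntegrableOn (fun x => |g x| ^ q * d x ^ (-β * q)) Ω ∧
          closure (Function.support g) ⊆ Ω ∧
          (∫ x in Ω, g x) = 0 ∧
          (∫ x in Ω, |F x - (g x + ψ * d x ^ (β * p))| ^ q * d x ^ (-β * q)) ^ (1 / q) < ε := by
  intro F hF hFq ε hε
  have hpq' : p.HolderConjugate q :=
    (Real.holderConjugate_iff.2 ⟨hq, by simpa only [one_div, add_comm] using hpq⟩).symm
  have hΩμ : volume Ω ≠ ∞ := hΩb.measure_lt_top.ne
  have hΩ0 : volume Ω ≠ 0 := (hΩo.measure_pos volume hΩne).ne'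
  rcases (frontier Ω).eq_empty_or_nonempty with hfr | hfr
  -- The frontier is empty only for `n = 0`. Then `d ≡ 0`: for `β = 0` every weight is `1`, so any
  -- positive `d` will do, and for `β ≠ 0` the weight `0 ^ (-β * q)` is the junk value `0`.
  · obtain rfl | hβ := eq_or_ne β 0
    · simpa using exists_meanZero_add_mul_rpow_approx hpq' hΩo.measurableSet hΩμ hΩ0
        (d := 1) (β := 0) (fun _ _ => one_pos) aemeasurable_const
        (by simpa using integrableOn_const (C := (1 : ℝ)) hΩμ) hF (by simpa using hFq) hε
    · have hv : ∀ x, d x ^ (-β * q) = 0 := fun x => by simp [hd, hfr, hβ, hpq'.symm.ne_zero]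
      refine ⟨0, 0, aemeasurable_const, by simp only [hv, mul_zero, integrableOn_zero],
        by simp, by simp, ?_⟩
      simpa only [hv, mul_zero, integral_zero, Real.zero_rpow (one_div_ne_zero hpq'.symm.ne_zero)]
  · have hdpos : ∀ x ∈ Ω, 0 < d x := fun x hx => hd ▸
      (isClosed_frontier.notMem_iff_infDist_pos hfr).1 fun h => (hΩo.frontier_eq ▸ h).2 hx
    exact exists_meanZero_add_mul_rpow_approx hpq' hΩo.measurableSet hΩμ hΩ0 hdpos
      (hd ▸ (Metric.continuous_infDist_pt _).measurable.aemeasurable) hw hF hFq hε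

theorem stmt9 {n : ℕ} (Ω : Set (EuclideanSpace ℝ (Fin n)))
    (hΩo : IsOpen Ω) (hΩb : Bornology.IsBounded Ω) (hΩne : Ω.Nonempty)
    (p q β : ℝ) (hp : 1 < p) (hq : 1 < q) (hpq : 1 / p + 1 / q = 1)
    (d : EuclideanSpace ℝ (Fin n) → ℝ)
    (hd : d = fun x => Metric.infDist x (frontier Ω))
    (hw : IntegrableOn (fun x => d x ^ (β * p)) Ω) :
    ∀ F : EuclideanSpace ℝ (Fin n) → ℝ,
      AEMeasurable F (volume.restrict Ω) →
      IntegrableOn (fun x => |F x| ^ q * d x ^ (-β * q)) Ω →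
      ∀ ε : ℝ, 0 < ε →
        ∃ (g : EuclideanSpace ℝ (Fin n) → ℝ) (ψ : ℝ),
          AEMeasurable g (volume.restrict Ω) ∧
          IntegrableOn (fun x => |g x| ^ q * d x ^ (-β * q)) Ω ∧
          closure (Function.support g) ⊆ Ω ∧
          (∫ x in Ω, g x) = 0 ∧
          (∫ x in Ω, |F x - (g x + ψ * d x ^ (β * p))| ^ q * d x ^ (-β * q)) ^ (1 / q) < ε :=
  stmt9_general Ω hΩo hΩb hΩne p q β hq hpq d hd hw
end

section
/- Let $0<\alpha\le 1$, $K>0$, and let $\varphi:(-\tfrac32,\tfrac32)^{n-1}\to\mathbb{R}$ satisfy $|\varphi(x)-\varphi(y)|\le K|x-y|^\alpha$ and $2\le\varphi<3$. In the Whitney-type decomposition of $\Omega_\varphi=\{(x',x_n): x'\in(-\tfrac12,\tfrac12)^{n-1},\,0<x_n<\varphi(x')\}$ into dyadic cubes built level by level from the root cube $(-\tfrac12,\tfrac12)^{n-1}\times(0,1)$ (a cube of edge $2^{-j}$ either is translated upward unchanged, or is split into $2^{n-1}$ children of edge $2^{-j-1}$ when the tripled translated cube leaves the expanded domain), the number $\mathbb{P}_i(t)$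 of cubes of edge $2^{-i}$ on the path from the root to any vertex $t$ satisfies $\mathbb{P}_i(t)\le C\,2^{i(1-\alpha)}$, with $C$ depending only on $n$, $\alpha$, and $K$. -/
open scoped Classical

noncomputable section

/-- The expanded Hölder graph domain `Ω_{φ,E}`. -/
def OmegaE (n : ℕ) (φ : (Fin (n - 1) → ℝ) → ℝ) : Set ((Fin (n - 1) → ℝ) × ℝ) :=
  {x | (∀ i, |x.1 i| < 3 / 2) ∧ 0 < x.2 ∧ x.2 < φ x.1}

/-- The tripled upward-translated cube `3(Q + ℓ eₙ)` of the cube with lower corner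
`(c, y)` and edge `ℓ`. -/
def tripled (n : ℕ) (c : Fin (n - 1) → ℝ) (y ℓ : ℝ) : Set ((Fin (n - 1) → ℝ) × ℝ) :=
  {x | (∀ i, c i - ℓ < x.1 i ∧ x.1 i < c i + 2 * ℓ) ∧ y < x.2 ∧ x.2 < y + 3 * ℓ}

/-- The Whitney-type tree decomposition of the Hölder graph domain
`Ω_φ = (-1/2,1/2)^{n-1} × (0,φ)`, built level by level from the root cube
`(-1/2,1/2)^{n-1} × (0,1)`: a cube either is translated upward unchanged (when the tripled
translated cube fits in the expanded domain `Ω_{φ,E}`) or is split into `2^{n-1}` children of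
half the edge length.  Each vertex `t` carries a cube of edge `2^{-lvl t}` with base lower
corner `corner t` and bottom height `height t`. -/
structure WhitneyTree (n : ℕ) (φ : (Fin (n - 1) → ℝ) → ℝ) where
  Γ : Type
  countable : Countable Γ
  a : Γ
  par : Γ → Γ
  par_root : par a = a
  reaches : ∀ t, ∃ m : ℕ, par^[m] t = a
  lvl : Γ → ℕ
  corner : Γ → Fin (n - 1) → ℝ
  height : Γ → ℝ
  lvl_root : lvl a = 0
  corner_root : ∀ i, corner a i = -(1 / 2)
  height_root : height a = 0
  child_translate : ∀ t, t ≠ a →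
    tripled n (corner (par t)) (height (par t)) ((2 : ℝ) ^ (-(lvl (par t) : ℤ))) ⊆ OmegaE n φ →
    lvl t = lvl (par t) ∧ corner t = corner (par t) ∧
      height t = height (par t) + (2 : ℝ) ^ (-(lvl (par t) : ℤ))
  child_split : ∀ t, t ≠ a →
    ¬ tripled n (corner (par t)) (height (par t)) ((2 : ℝ) ^ (-(lvl (par t) : ℤ))) ⊆ OmegaE n φ →
    lvl t = lvl (par t) + 1 ∧
      (∀ i, corner t i = corner (par t) i ∨
        corner t i = corner (par t) i + (2 : ℝ) ^ (-(lvl t : ℤ))) ∧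
      height t = height (par t) + (2 : ℝ) ^ (-(lvl (par t) : ℤ))
  below_graph : ∀ t (x' : Fin (n - 1) → ℝ),
    (∀ i, corner t i ≤ x' i ∧ x' i ≤ corner t i + (2 : ℝ) ^ (-(lvl t : ℤ))) →
    height t + (2 : ℝ) ^ (-(lvl t : ℤ)) ≤ φ x'
  cube_inj : ∀ s t, lvl s = lvl t → corner s = corner t → height s = height t → s = t

/-!
Along the path to `t`, the cubes of edge `δ = 2^{-i}` are stacked over one base corner `c`,
at distinct heights in `δℤ`. The top one lies below the graph, so every height is at most
`φ c - δ`. The bottom one is the root or the child of a cube that was split because its tripled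
translate left `Ω_{φ,E}`; a point of that translate on or above the graph lies within `4δ` of `c`
and below height `h₀ + 4δ`, so by Hölder continuity `φ c ≤ h₀ + K (4δ)^α + 4δ`. The stack
therefore has at most `K (4δ)^α / δ + 4 ≤ 4 K 2^{i(1-α)} + 4` cubes.
-/

open Set

theorem le_of_treeLe {Γ β : Type*} [Preorder β] {par : Γ → Γ} {f : Γ → β}
    (hf : ∀ s, f (par s) ≤ f s) {s t : Γ} (h : treeLe par s t) : f s ≤ f t := by
  obtain ⟨m, rfl⟩ := h
  induction m generalizing t with
  | zero => exact le_rfl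
  | succ m ih => exact (ih (t := par t)).trans (hf t)

theorem treeLe_total {Γ : Type*} {par : Γ → Γ} {r r' t : Γ} (hr : treeLe par r t)
    (hr' : treeLe par r' t) : treeLe par r r' ∨ treeLe par r' r := by
  obtain ⟨m, rfl⟩ := hr
  obtain ⟨m', rfl⟩ := hr'
  rcases le_total m m' with h | h
  · obtain ⟨d, rfl⟩ := Nat.exists_eq_add_of_le h
    exact Or.inr ⟨d, by rw [add_comm, Function.iterate_add_apply]⟩
  · obtain ⟨d, rfl⟩ := Nat.exists_eq_add_of_le h
    exact Or.inl ⟨d, by rw [add_comm, Function.iterate_add_apply]⟩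

theorem ncard_le_of_injOn_lattice {ι : Type*} {S : Set ι} {h : ι → ℝ} {δ a b : ℝ} (hδ : 0 < δ)
    (hlat : ∀ s ∈ S, ∃ j : ℤ, h s = j * δ) (hinj : S.InjOn h)
    (hmem : ∀ s ∈ S, h s ∈ Icc a b) (hab : a ≤ b) :
    (S.ncard : ℝ) ≤ (b - a) / δ + 1 := by
  have hfloor : ∀ s ∈ S, (⌊h s / δ⌋ : ℝ) = h s / δ := by
    intro s hs
    obtain ⟨j, hj⟩ := hlat s hs
    rw [hj, mul_div_cancel_right₀ _ hδ.ne', Int.floor_intCast]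
  have hcard : S.ncard ≤ (Finset.Icc ⌈a / δ⌉ ⌊b / δ⌋ : Set ℤ).ncard := by
    refine ncard_le_ncard_of_injOn (fun s => ⌊h s / δ⌋) (fun s hs => ?_) (fun s hs s' hs' e => ?_)
    · obtain ⟨has, hsb⟩ := hmem s hs
      refine Finset.mem_coe.2 (Finset.mem_Icc.2 ⟨Int.ceil_le.2 ?_, Int.floor_mono ?_⟩)
      · rw [hfloor s hs]; gcongr
      · gcongr
    · have := congrArg (fun z : ℤ => (z : ℝ)) e
      simp only [hfloor s hs, hfloor s' hs'] at this
      exact hinj hs hs' (by field_simp at this; exact this)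
  rw [ncard_coe_finset, Int.card_Icc] at hcard
  calc (S.ncard : ℝ) ≤ ((⌊b / δ⌋ + 1 - ⌈a / δ⌉).toNat : ℤ) := by exact_mod_cast hcard
    _ = max ((⌊b / δ⌋ : ℝ) + 1 - ⌈a / δ⌉) 0 := by rw [Int.toNat_eq_max]; push_cast; rfl
    _ ≤ (b - a) / δ + 1 := by
      refine max_le ?_ (by have := div_nonneg (sub_nonneg.2 hab) hδ.le; linarith)
      linarith [Int.floor_le (b / δ), Int.le_ceil (a / δ), sub_div b a δ]

theorem rpow_four_mul_two_zpow_div_le {α : ℝ} (hα1 : α ≤ 1) (i : ℕ) :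
    (4 * (2 : ℝ) ^ (-(i : ℤ))) ^ α / (2 : ℝ) ^ (-(i : ℤ)) ≤ 4 * 2 ^ ((i : ℝ) * (1 - α)) := by
  have hδ : (2 : ℝ) ^ (-(i : ℤ)) = 2 ^ (-(i : ℝ)) := by
    rw [← Real.rpow_intCast]; push_cast; rfl
  rw [hδ, Real.mul_rpow (by norm_num) (by positivity), ← Real.rpow_mul (by norm_num), mul_div_assoc,
    ← Real.rpow_sub (by norm_num), show -(i : ℝ) * α - -i = i * (1 - α) by ring]
  gcongr
  calc (4 : ℝ) ^ α ≤ 4 ^ (1 : ℝ) := Real.rpow_le_rpow_of_exponent_le (by norm_num) hα1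
    _ = 4 := Real.rpow_one 4

namespace WhitneyTree

variable {n : ℕ} {φ : (Fin (n - 1) → ℝ) → ℝ} (T : WhitneyTree n φ)

def Translates (s : T.Γ) : Prop :=
  tripled n (T.corner s) (T.height s) ((2 : ℝ) ^ (-(T.lvl s : ℤ))) ⊆ OmegaE n φ

theorem induction_on {P : T.Γ → Prop} (root : P T.a) (step : ∀ s, s ≠ T.a → P (T.par s) → P s)
    (s : T.Γ) : P s := by
  obtain ⟨m, hm⟩ := T.reaches s
  induction m generalizing s with
  | zero => rwa [← hm] at root
  | succ m ih =>
    by_cases hs : s = T.a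
    · rwa [hs]
    · exact step s hs (ih _ hm)

theorem height_eq_height_par_add (s : T.Γ) (hs : s ≠ T.a) :
    T.height s = T.height (T.par s) + (2 : ℝ) ^ (-(T.lvl (T.par s) : ℤ)) := by
  by_cases h : T.Translates (T.par s)
  · exact (T.child_translate s hs h).2.2
  · exact (T.child_split s hs h).2.2

theorem height_par_lt (s : T.Γ) (hs : s ≠ T.a) : T.height (T.par s) < T.height s := by
  rw [T.height_eq_height_par_add s hs]
  exact lt_add_of_pos_right _ (by positivity)

theorem height_par_le (s : T.Γ) : T.height (T.par s) ≤ T.height s := by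
  by_cases hs : s = T.a
  · rw [hs, T.par_root]
  · exact (T.height_par_lt s hs).le

theorem lvl_par_le (s : T.Γ) : T.lvl (T.par s) ≤ T.lvl s := by
  by_cases hs : s = T.a
  · rw [hs, T.par_root]
  by_cases h : T.Translates (T.par s)
  · exact (T.child_translate s hs h).1.ge
  · exact (T.child_split s hs h).1 ▸ Nat.le_succ _

theorem corner_par_eq_of_lvl_par_eq (s : T.Γ) (hl : T.lvl (T.par s) = T.lvl s) :
    T.corner (T.par s) = T.corner s := by
  by_cases hs : s = T.a
  · rw [hs, T.par_root]
  by_cases h : T.Translates (T.par s)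
  · exact (T.child_translate s hs h).2.1.symm
  · have := (T.child_split s hs h).1
    omega

theorem two_zpow_neg_lvl_par (s : T.Γ) (hl : T.lvl s = T.lvl (T.par s) + 1) :
    (2 : ℝ) ^ (-(T.lvl (T.par s) : ℤ)) = 2 * 2 ^ (-(T.lvl s : ℤ)) := by
  rw [hl, Nat.cast_succ, neg_add, zpow_add₀ two_ne_zero, zpow_neg_one]
  ring

theorem height_nonneg (s : T.Γ) : 0 ≤ T.height s := by
  induction s using T.induction_on with
  | root => rw [T.height_root]
  | step s _ ih => exact ih.trans (T.height_par_le s)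

theorem corner_mem (s : T.Γ) (j : Fin (n - 1)) :
    -(1 / 2) ≤ T.corner s j ∧ T.corner s j + (2 : ℝ) ^ (-(T.lvl s : ℤ)) ≤ 1 / 2 := by
  induction s using T.induction_on with
  | root => rw [T.corner_root, T.lvl_root]; norm_num
  | step s hs ih =>
    by_cases h : T.Translates (T.par s)
    · obtain ⟨hl, hc, -⟩ := T.child_translate s hs h
      rwa [hl, hc]
    · obtain ⟨hl, hc, -⟩ := T.child_split s hs h
      rw [T.two_zpow_neg_lvl_par s hl] at ih
      have : (0 : ℝ) < 2 ^ (-(T.lvl s : ℤ)) := by positivity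
      rcases hc j with e | e <;> rw [e] <;> constructor <;> linarith

theorem height_mem_lattice (s : T.Γ) :
    ∃ j : ℤ, T.height s = j * (2 : ℝ) ^ (-(T.lvl s : ℤ)) := by
  induction s using T.induction_on with
  | root => exact ⟨0, by simp [T.height_root]⟩
  | step s hs ih =>
    obtain ⟨j, hj⟩ := ih
    rw [T.height_eq_height_par_add s hs, hj]
    by_cases h : T.Translates (T.par s)
    · exact ⟨j + 1, by rw [(T.child_translate s hs h).1]; push_cast; ring⟩
    · exact ⟨2 * j + 2, by rw [T.two_zpow_neg_lvl_par s (T.child_split s hs h).1]; push_cast; ring⟩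

theorem finite_setOf_treeLe (t : T.Γ) : {r | treeLe T.par r t}.Finite := by
  obtain ⟨M, hM⟩ := T.reaches t
  refine ((Finset.range (M + 1)).finite_toSet.image fun m => T.par^[m] t).subset ?_
  rintro _ ⟨m, rfl⟩
  refine ⟨min m M, by simp, ?_⟩
  rcases le_total m M with h | h
  · simp [h]
  · obtain ⟨d, rfl⟩ := Nat.exists_eq_add_of_le h
    rw [min_eq_right h, add_comm, Function.iterate_add_apply, hM,
      Function.iterate_fixed T.par_root]
    exact hM

theorem eq_of_treeLe_of_height_le {s t : T.Γ} (h : treeLe T.par s t)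
    (hh : T.height t ≤ T.height s) : s = t := by
  obtain ⟨_ | m, rfl⟩ := h
  · rfl
  by_cases ht : t = T.a
  · subst ht
    exact Function.iterate_fixed T.par_root _
  · have : T.height (T.par^[m + 1] t) ≤ T.height (T.par t) :=
      le_of_treeLe T.height_par_le ⟨m, rfl⟩
    linarith [T.height_par_lt t ht]

theorem corner_eq_of_treeLe_of_lvl_eq {s t : T.Γ} (h : treeLe T.par s t)
    (hl : T.lvl s = T.lvl t) : T.corner s = T.corner t := by
  obtain ⟨m, rfl⟩ := h
  induction m generalizing t with
  | zero => rfl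
  | succ m ih =>
    have h1 := le_of_treeLe T.lvl_par_le ⟨m, rfl⟩ (t := T.par t)
    have hpar : T.lvl (T.par t) = T.lvl t := le_antisymm (T.lvl_par_le t) (hl ▸ h1)
    exact (ih (hl.trans hpar.symm)).trans (T.corner_par_eq_of_lvl_par_eq t hpar)

theorem injOn_height_setOf_treeLe (t : T.Γ) : {r | treeLe T.par r t}.InjOn T.height :=
  fun r hr r' hr' e => by
    rcases treeLe_total hr hr' with h | h
    · exact T.eq_of_treeLe_of_height_le h e.ge
    · exact (T.eq_of_treeLe_of_height_le h e.le).symm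

theorem corner_eq_of_treeLe_of_treeLe {r r' t : T.Γ} (hr : treeLe T.par r t)
    (hr' : treeLe T.par r' t) (hl : T.lvl r = T.lvl r') : T.corner r = T.corner r' := by
  rcases treeLe_total hr hr' with h | h
  · exact T.corner_eq_of_treeLe_of_lvl_eq h hl
  · exact (T.corner_eq_of_treeLe_of_lvl_eq h hl.symm).symm

theorem phi_corner_le_of_split {α K : ℝ} (hα : 0 ≤ α) (hK : 0 ≤ K)
    (hφH : ∀ x y : Fin (n - 1) → ℝ, (∀ i, |x i| < 3 / 2) → (∀ i, |y i| < 3 / 2) →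
      |φ x - φ y| ≤ K * dist x y ^ α)
    (s : T.Γ) (hs : s ≠ T.a)
    (hsplit : ¬ T.Translates (T.par s)) :
    φ (T.corner s) ≤
      T.height s + K * (4 * 2 ^ (-(T.lvl s : ℤ))) ^ α + 4 * 2 ^ (-(T.lvl s : ℤ)) := by
  obtain ⟨hl, hc, hh⟩ := T.child_split s hs hsplit
  have hℓ := T.two_zpow_neg_lvl_par s hl
  set δ : ℝ := 2 ^ (-(T.lvl s : ℤ))
  have hδ : 0 < δ := by positivity
  obtain ⟨x, ⟨hx1, hx2, hx3⟩, hxΩ⟩ := not_subset.1 hsplit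
  rw [hℓ] at hx1 hx3 hh
  have hbase : ∀ j, |x.1 j| < 3 / 2 := fun j => by
    have := T.corner_mem (T.par s) j
    rw [hℓ] at this
    rw [abs_lt]
    constructor <;> linarith [hx1 j]
  have hcorner : ∀ j, |T.corner s j| < 3 / 2 := fun j => by
    rw [abs_lt]
    constructor <;> linarith [T.corner_mem s j]
  have hgraph : φ x.1 ≤ x.2 := by
    by_contra! h
    exact hxΩ ⟨hbase, (T.height_nonneg _).trans_lt hx2, h⟩
  have hdist : dist (T.corner s) x.1 ≤ 4 * δ := by
    refine (dist_pi_le_iff (by positivity)).2 fun j => ?_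
    rw [Real.dist_eq, abs_le]
    rcases hc j with e | e <;> rw [e] <;> constructor <;> linarith [hx1 j]
  have hHolder : φ (T.corner s) - φ x.1 ≤ K * (4 * δ) ^ α :=
    (le_abs_self _).trans ((hφH _ _ hcorner hbase).trans (by gcongr))
  linarith

theorem phi_corner_sub_height_le {α K : ℝ} (hα : 0 ≤ α) (hα1 : α ≤ 1) (hK : 0 ≤ K)
    (hφH : ∀ x y : Fin (n - 1) → ℝ, (∀ i, |x i| < 3 / 2) → (∀ i, |y i| < 3 / 2) →
      |φ x - φ y| ≤ K * dist x y ^ α)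
    (hφub : ∀ x, φ x < 3) (s : T.Γ) (hs : s = T.a ∨ T.lvl (T.par s) ≠ T.lvl s) :
    φ (T.corner s) - T.height s ≤
      2 ^ (-(T.lvl s : ℤ)) * (4 * K * 2 ^ ((T.lvl s : ℝ) * (1 - α)) + 4) := by
  rcases hs with rfl | hl
  · simp only [T.height_root, T.lvl_root, Nat.cast_zero, neg_zero, zpow_zero, zero_mul,
      Real.rpow_zero, one_mul, mul_one, sub_zero]
    linarith [hφub (T.corner T.a)]
  have hs : s ≠ T.a := by
    rintro rfl
    exact hl (by rw [T.par_root])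
  have hsplit : ¬ T.Translates (T.par s) :=
    fun h => hl (T.child_translate s hs h).1.symm
  have hpow := rpow_four_mul_two_zpow_div_le hα1 (T.lvl s)
  rw [div_le_iff₀ (by positivity)] at hpow
  have := T.phi_corner_le_of_split hα hK hφH s hs hsplit
  linarith [mul_le_mul_of_nonneg_left hpow hK]

theorem ncard_treeLe_lvl_le {α K : ℝ} (hα : 0 ≤ α) (hα1 : α ≤ 1) (hK : 0 ≤ K)
    (hφH : ∀ x y : Fin (n - 1) → ℝ, (∀ i, |x i| < 3 / 2) → (∀ i, |y i| < 3 / 2) →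
      |φ x - φ y| ≤ K * dist x y ^ α)
    (hφub : ∀ x, φ x < 3) (t : T.Γ) (i : ℕ) :
    ({r | treeLe T.par r t ∧ T.lvl r = i}.ncard : ℝ) ≤ 4 * K * 2 ^ ((i : ℝ) * (1 - α)) + 4 := by
  set S := {r | treeLe T.par r t ∧ T.lvl r = i}
  rcases S.eq_empty_or_nonempty with hS | hS
  · rw [hS, ncard_empty, Nat.cast_zero]
    positivity
  obtain ⟨s₀, hs₀, hmin⟩ :=
    exists_min_image S T.height ((T.finite_setOf_treeLe t).subset fun r hr => hr.1) hS
  set δ : ℝ := 2 ^ (-(i : ℤ))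
  have hmem : ∀ s ∈ S, T.height s ∈ Icc (T.height s₀) (φ (T.corner s₀) - δ) := fun s hs => by
    refine ⟨hmin s hs, ?_⟩
    have := T.below_graph s (T.corner s) fun j => ⟨le_rfl, le_add_of_nonneg_right (by positivity)⟩
    rw [T.corner_eq_of_treeLe_of_treeLe hs.1 hs₀.1 (hs.2.trans hs₀.2.symm), hs.2] at this
    linarith
  have hlat : ∀ s ∈ S, ∃ j : ℤ, T.height s = j * δ := fun s hs => by
    simpa only [hs.2] using T.height_mem_lattice s
  have hbottom : s₀ = T.a ∨ T.lvl (T.par s₀) ≠ T.lvl s₀ := by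
    refine or_iff_not_imp_left.2 fun hne hl => (T.height_par_lt s₀ hne).not_ge (hmin _ ⟨?_, ?_⟩)
    · obtain ⟨m, hm⟩ := hs₀.1
      exact ⟨m + 1, by rw [Function.iterate_succ_apply', hm]⟩
    · exact hl.trans hs₀.2
  have hgap := T.phi_corner_sub_height_le hα hα1 hK hφH hφub s₀ hbottom
  rw [hs₀.2] at hgap
  calc (S.ncard : ℝ) ≤ (φ (T.corner s₀) - δ - T.height s₀) / δ + 1 :=
        ncard_le_of_injOn_lattice (by positivity) hlat
          ((T.injOn_height_setOf_treeLe t).mono fun r hr => hr.1) hmem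
          ((hmem s₀ hs₀).1.trans (hmem s₀ hs₀).2)
    _ ≤ _ := by
      rw [div_add_one (by positivity), div_le_iff₀ (by positivity)]
      linarith

end WhitneyTree

theorem stmt14_general (n : ℕ) (α K : ℝ) (hα : 0 < α) (hα1 : α ≤ 1) (hK : 0 < K)
    (φ : (Fin (n - 1) → ℝ) → ℝ)
    (hφH : ∀ x y : Fin (n - 1) → ℝ, (∀ i, |x i| < 3 / 2) → (∀ i, |y i| < 3 / 2) →
      |φ x - φ y| ≤ K * dist x y ^ α)
    (hφub : ∀ x, φ x < 3) :
    ∃ C : ℝ, 0 < C ∧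
      ∀ (T : WhitneyTree n φ) (t : T.Γ) (i : ℕ),
        (({r : T.Γ | treeLe T.par r t ∧ T.lvl r = i}.ncard : ℝ)) ≤
          C * 2 ^ ((i : ℝ) * (1 - α)) := by
  refine ⟨4 * K + 4, by positivity, fun T t i => ?_⟩
  have hgrowth : (1 : ℝ) ≤ 2 ^ ((i : ℝ) * (1 - α)) :=
    Real.one_le_rpow one_le_two (mul_nonneg i.cast_nonneg (sub_nonneg.2 hα1))
  calc _ ≤ 4 * K * 2 ^ ((i : ℝ) * (1 - α)) + 4 :=
        T.ncard_treeLe_lvl_le hα.le hα1 hK.le hφH hφub t i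
    _ ≤ (4 * K + 4) * 2 ^ ((i : ℝ) * (1 - α)) := by linarith

theorem stmt14 (n : ℕ) (hn : 2 ≤ n) (α K : ℝ) (hα : 0 < α) (hα1 : α ≤ 1) (hK : 0 < K)
    (φ : (Fin (n - 1) → ℝ) → ℝ)
    (hφH : ∀ x y : Fin (n - 1) → ℝ, (∀ i, |x i| < 3 / 2) → (∀ i, |y i| < 3 / 2) →
      |φ x - φ y| ≤ K * dist x y ^ α)
    (hφlb : ∀ x, 2 ≤ φ x) (hφub : ∀ x, φ x < 3) :
    ∃ C : ℝ, 0 < C ∧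
      ∀ (T : WhitneyTree n φ) (t : T.Γ) (i : ℕ),
        (({r : T.Γ | treeLe T.par r t ∧ T.lvl r = i}.ncard : ℝ)) ≤
          C * 2 ^ ((i : ℝ) * (1 - α)) :=
  stmt14_general n α K hα hα1 hK φ hφH hφub
end
end
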